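/- arXiv:2305.12177 — 4 statements merged into one kernel-verified Lean document; each statement's English description precedes it below -/
import Mathlib

section
/- Let N ≥ 3, γ ∈ ℝ, and for a ≥ 0, τ ≥ 0 define Q₀(τ,a) = τ + a + (γ - N/2)² and Q₁(τ,a) = (τ + a - N + 3 + (γ + (N-2)/2)²)·Q₀(τ,a) + 4(γ-1)a. Then for each fixed τ ≥ 0, the function a ↦ Q₁(τ,a)/Q₀(τ,a) is strictly increasing on [N-1, ∞). -/
open Set

/-- for fixed `τ ≥ 0`, the map `a ↦ Q₁(τ,a)/Q₀(τ,a)` is strictly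
increasing on `[N-1, ∞)`. -/
theorem stmt1 (N : ℕ) (hN : 3 ≤ N) (γ : ℝ)
    (Q₀ Q₁ : ℝ → ℝ → ℝ)
    (hQ₀ : ∀ τ a : ℝ, Q₀ τ a = τ + a + (γ - N / 2) ^ 2)
    (hQ₁ : ∀ τ a : ℝ, Q₁ τ a
      = (τ + a - N + 3 + (γ + (N - 2) / 2) ^ 2) * Q₀ τ a + 4 * (γ - 1) * a)
    (τ : ℝ) (hτ : 0 ≤ τ) :
    StrictMonoOn (fun a : ℝ => Q₁ τ a / Q₀ τ a) (Set.Ici ((N : ℝ) - 1)) := by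
  have hn : (3:ℝ) ≤ (N:ℝ) := by exact_mod_cast hN
  set n : ℝ := (N:ℝ) with hn'
  intro a ha b hb hab
  simp only [hQ₁, hQ₀]
  have ha' : n - 1 ≤ a := ha
  have hb' : n - 1 ≤ b := hb
  have hc : (0:ℝ) ≤ (γ - n/2)^2 := sq_nonneg _
  have hs0 : 0 ≤ τ + (γ - n/2)^2 := by linarith
  have hQa : 0 < τ + a + (γ - n/2)^2 := by linarith
  have hQb : 0 < τ + b + (γ - n/2)^2 := by linarith
  rw [div_lt_div_iff₀ hQa hQb]
  -- `s = τ + (γ-n/2)^2` satisfies `s ≥ 6 - 2n - 4γ`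
  have hlb : τ + (γ - n/2)^2 ≥ 6 - 2*n - 4*γ := by
    nlinarith [sq_nonneg (γ + (4 - n)/2)]
  -- key quadratic inequality
  have key : (τ + (γ - n/2)^2 + (n-1))^2 + 4*(γ-1)*(τ + (γ - n/2)^2) ≥ 0 := by
    nlinarith [mul_nonneg hs0 (by linarith : (0:ℝ) ≤ τ + (γ - n/2)^2 - (6 - 2*n - 4*γ)),
      sq_nonneg (n-1)]
  -- strict positivity of Q₀a * Q₀b + 4(γ-1)s
  have hprod : (τ + a + (γ - n/2)^2) * (τ + b + (γ - n/2)^2)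
      + 4*(γ-1)*(τ + (γ - n/2)^2) > 0 := by
    nlinarith [key,
      mul_pos (by linarith : (0:ℝ) < (a - (n-1)) + (b - (n-1)))
        (by linarith : (0:ℝ) < τ + (γ - n/2)^2 + (n-1)),
      mul_nonneg (by linarith : (0:ℝ) ≤ a - (n-1)) (by linarith : (0:ℝ) ≤ b - (n-1))]
  nlinarith [mul_pos (sub_pos.mpr hab) hprod]
end

section
/- Let u : ℝ^N \ {0} → ℝ^N be a smooth vector field that is spherical (x · u(x) = 0) and divergence-free. Then for every r > 0, the integral of u over the sphere of radius r vanishes: ∫_{S^{N-1}} u(rσ) dσ = 0 (componentwise). -/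
open MeasureTheory
open scoped RealInnerProductSpace BigOperators

section Aux

open Set Metric

lemma stmt6_coord_le_norm {n : ℕ} (v : EuclideanSpace ℝ (Fin n)) (k : Fin n) : |v k| ≤ ‖v‖ := by
  rw [EuclideanSpace.norm_eq]
  rw [show |v k| = Real.sqrt ((v k)^2) by rw [Real.sqrt_sq_eq_abs]]
  apply Real.sqrt_le_sqrt
  calc (v k)^2 = ‖v k‖^2 := by rw [Real.norm_eq_abs, sq_abs]
    _ ≤ _ := Finset.single_le_sum (f := fun i => ‖v i‖^2) (fun i _ => by positivity)
        (Finset.mem_univ k)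

lemma stmt6_hasFDerivAt_norm {E : Type*} [NormedAddCommGroup E] [InnerProductSpace ℝ E]
    {x : E} (hx : x ≠ 0) :
    HasFDerivAt (fun y : E => ‖y‖) (‖x‖⁻¹ • (innerSL ℝ x : E →L[ℝ] ℝ)) x := by
  have h1 : HasFDerivAt (fun y : E => ‖y‖ ^ 2) (2 • (innerSL ℝ x : E →L[ℝ] ℝ)) x :=
    (hasStrictFDerivAt_norm_sq x).hasFDerivAt
  have hne : ‖x‖ ^ 2 ≠ 0 := pow_ne_zero _ (norm_ne_zero_iff.2 hx)
  have h2 := h1.sqrt hne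
  have heq : (fun y : E => Real.sqrt (‖y‖ ^ 2)) = fun y : E => ‖y‖ := by
    funext y; rw [Real.sqrt_sq (norm_nonneg y)]
  rw [heq] at h2
  have hD : (1 / (2 * Real.sqrt (‖x‖ ^ 2))) • (2 • (innerSL ℝ x : E →L[ℝ] ℝ))
      = ‖x‖⁻¹ • (innerSL ℝ x : E →L[ℝ] ℝ) := by
    rw [Real.sqrt_sq (norm_nonneg x)]
    ext y
    simp only [ContinuousLinearMap.smul_apply, ContinuousLinearMap.coe_smul',
      Pi.smul_apply, smul_eq_mul]
    have : ‖x‖ ≠ 0 := norm_ne_zero_iff.2 hx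
    field_simp
    ring
  rw [hD] at h2
  exact h2

variable {E : Type*} [NormedAddCommGroup E] [NormedSpace ℝ E] [MeasurableSpace E]
  [BorelSpace E] [FiniteDimensional ℝ E] [Nontrivial E]

local notation "dim" => Module.finrank ℝ

lemma stmt6_polar_integral (μ : Measure E) [μ.IsAddHaarMeasure] (f : E → ℝ)
    (hf : Integrable f μ) :
    ∫ x, f x ∂μ = ∫ s in Ioi (0:ℝ),
      s ^ (dim E - 1) • ∫ σ : sphere (0:E) 1, f (s • (σ : E)) ∂μ.toSphere := by
  have hmeas : MeasurableSet ({0}ᶜ : Set E) := (measurableSet_singleton 0).compl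
  have key : ∀ x : ({0}ᶜ : Set E),
      f ((homeomorphUnitSphereProd E x).2.1 • ((homeomorphUnitSphereProd E x).1.1 : E))
        = f x.1 := by
    intro x
    have hx : (x : E) ≠ 0 := x.2
    simp [smul_inv_smul₀ (norm_ne_zero_iff.2 hx)]
  have hint0 : Integrable (fun x : ({0}ᶜ : Set E) => f x.1) (μ.comap Subtype.val) := by
    rw [← Function.comp_def f Subtype.val,
      ← (MeasurableEmbedding.subtype_coe hmeas).integrable_map_iff,
      map_comap_subtype_coe hmeas]
    exact hf.restrict
  have hintP : Integrable (fun p : sphere (0:E) 1 × Ioi (0:ℝ) => f (p.2.1 • p.1.1))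
      (μ.toSphere.prod (Measure.volumeIoiPow (dim E - 1))) := by
    rw [← μ.measurePreserving_homeomorphUnitSphereProd.integrable_comp_emb
      (Homeomorph.measurableEmbedding _)]
    exact hint0.congr (ae_of_all _ fun x => (key x).symm)
  calc ∫ x, f x ∂μ = ∫ x : ({0}ᶜ : Set E), f x.1 ∂(μ.comap Subtype.val) := by
        rw [integral_subtype_comap hmeas, restrict_compl_singleton]
    _ = ∫ p : sphere (0:E) 1 × Ioi (0:ℝ), f (p.2.1 • p.1.1)
          ∂(μ.toSphere.prod (Measure.volumeIoiPow (dim E - 1))) := by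
        rw [← μ.measurePreserving_homeomorphUnitSphereProd.integral_comp
          (Homeomorph.measurableEmbedding _) (fun p => f (p.2.1 • p.1.1))]
        exact integral_congr_ae (ae_of_all _ fun x => (key x).symm)
    _ = ∫ t : Ioi (0:ℝ), ∫ σ : sphere (0:E) 1, f (t.1 • σ.1) ∂μ.toSphere
          ∂(Measure.volumeIoiPow (dim E - 1)) := integral_prod_symm _ hintP
    _ = ∫ s in Ioi (0:ℝ),
          s ^ (dim E - 1) • ∫ σ : sphere (0:E) 1, f (s • (σ : E)) ∂μ.toSphere := by
        simp only [Measure.volumeIoiPow, ENNReal.ofReal]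
        rw [integral_withDensity_eq_integral_smul
          ((measurable_subtype_coe.pow_const _).real_toNNReal),
          integral_subtype_comap measurableSet_Ioi
            (fun s => Real.toNNReal (s ^ (dim E - 1)) •
              ∫ σ : sphere (0:E) 1, f (s • (σ:E)) ∂μ.toSphere)]
        refine setIntegral_congr_fun measurableSet_Ioi fun s hs => ?_
        rw [NNReal.smul_def, Real.coe_toNNReal _ (pow_nonneg hs.out.le _)]

end Aux

section KeyZero

open Set Metric

variable (N : ℕ)
local notation "E'" => EuclideanSpace ℝ (Fin N)

lemma stmt6_key_zero (hN : 0 < N)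
    (u : E' → E')
    (hu : ContDiffOn ℝ (⊤ : ℕ∞) u {(0 : E')}ᶜ)
    (hsph : ∀ x : E', x ≠ 0 → ⟪x, u x⟫ = 0)
    (hdiv : ∀ x : E', x ≠ 0 →
      ∑ k, fderiv ℝ u x (EuclideanSpace.single k 1) k = 0)
    (k : Fin N) (ψ : ℝ → ℝ) (hψ : ContDiff ℝ (↑(⊤:ℕ∞)) ψ) (hsupp : HasCompactSupport ψ)
    (hsub : tsupport ψ ⊆ Ioi (0:ℝ)) :
    Integrable (fun x : E' => ψ ‖x‖ * u x k) volume ∧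
      ∫ x : E', ψ ‖x‖ * u x k ∂volume = 0 := by
  -- ψ vanishes near 0
  obtain ⟨ε, hε, hball⟩ : ∃ ε > 0, ball (0:ℝ) ε ⊆ (tsupport ψ)ᶜ := by
    have h0 : (0:ℝ) ∈ (tsupport ψ)ᶜ := fun h => lt_irrefl (0:ℝ) (hsub h)
    exact Metric.mem_nhds_iff.1 ((isClosed_tsupport ψ).isOpen_compl.mem_nhds h0)
  have hψ0 : ∀ s : ℝ, |s| < ε → ψ s = 0 := by
    intro s hs
    exact image_eq_zero_of_notMem_tsupport (hball (by simpa [Real.dist_eq] using hs))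
  set Φ : E' → ℝ := fun x => ψ ‖x‖ with hΦdef
  have hΦ0 : ∀ x : E', ‖x‖ < ε → Φ x = 0 := fun x hx =>
    hψ0 _ (by rwa [abs_of_nonneg (norm_nonneg x)])
  have hΦsmooth : ContDiff ℝ (↑(⊤:ℕ∞)) Φ := by
    rw [contDiff_iff_contDiffAt]
    intro x
    rcases eq_or_ne x 0 with rfl | hx
    · apply ContDiffAt.congr_of_eventuallyEq (contDiffAt_const (c := (0:ℝ)))
      filter_upwards [Metric.ball_mem_nhds (0:E') hε] with y hy
      exact hΦ0 y (by simpa using hy)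
    · exact (hψ.contDiffAt).comp x (contDiffAt_norm ℝ hx)
  set P : Fin N → (E' →L[ℝ] ℝ) := fun i => EuclideanSpace.proj i with hPdef
  set F : Fin N → E' → ℝ := fun j y => Φ y * (P k y * P j (u y)) with hFdef
  set e : Fin N → E' := fun j => EuclideanSpace.single j 1 with hedef
  have husm : ∀ x : E', x ≠ 0 → ContDiffAt ℝ (↑(⊤:ℕ∞)) u x := fun x hx =>
    ((hu.of_le (by simp)).contDiffAt (isOpen_compl_singleton.mem_nhds hx))
  have hFsmooth : ∀ j, ContDiff ℝ (↑(⊤:ℕ∞)) (F j) := by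
    intro j
    rw [contDiff_iff_contDiffAt]
    intro x
    rcases eq_or_ne x 0 with rfl | hx
    · apply ContDiffAt.congr_of_eventuallyEq (contDiffAt_const (c := (0:ℝ)))
      filter_upwards [Metric.ball_mem_nhds (0:E') hε] with y hy
      simp only [hFdef, hΦ0 y (by simpa using hy), zero_mul]
    · exact (hΦsmooth.contDiffAt).mul
        (((P k).contDiff.contDiffAt).mul (((P j).contDiff.contDiffAt).comp x (husm x hx)))
  obtain ⟨R, hR⟩ : ∃ R : ℝ, tsupport ψ ⊆ closedBall (0:ℝ) R :=
    hsupp.isBounded.subset_closedBall 0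
  have hFsupp : ∀ j, HasCompactSupport (F j) := by
    intro j
    apply HasCompactSupport.intro (isCompact_closedBall (0:E') R)
    intro y hy
    have hψy : ψ ‖y‖ = 0 := by
      apply image_eq_zero_of_notMem_tsupport
      intro hmem
      have := hR hmem
      rw [Real.closedBall_eq_Icc] at this
      exact hy (by simpa [Metric.mem_closedBall, dist_zero_right] using this.2)
    have : Φ y = 0 := hψy
    simp [hFdef, this]
  have h1le : (↑(⊤:ℕ∞) : WithTop ℕ∞) ≠ 0 := by simp
  have hFdiff : ∀ j, Differentiable ℝ (F j) := fun j => (hFsmooth j).differentiable h1le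
  have hFint : ∀ j, Integrable (F j) volume :=
    fun j => ((hFsmooth j).continuous).integrable_of_hasCompactSupport (hFsupp j)
  have hF'cont : ∀ j, Continuous fun x => fderiv ℝ (F j) x (e j) := fun j =>
    (ContinuousLinearMap.apply ℝ ℝ (e j)).continuous.comp ((hFsmooth j).continuous_fderiv h1le)
  have hF'supp : ∀ j, HasCompactSupport fun x => fderiv ℝ (F j) x (e j) := fun j =>
    ((hFsupp j).fderiv ℝ).comp_left (g := fun L : E' →L[ℝ] ℝ => L (e j)) rfl
  have hF'int : ∀ j, Integrable (fun x => fderiv ℝ (F j) x (e j)) volume := fun j =>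
    (hF'cont j).integrable_of_hasCompactSupport (hF'supp j)
  have hIj : ∀ j, ∫ x, fderiv ℝ (F j) x (e j) ∂volume = 0 := by
    intro j
    have h1 : Integrable (fun x : E' => fderiv ℝ (fun _ => (1:ℝ)) x (e j) * F j x) volume := by
      simpa [fderiv_const] using (integrable_zero E' ℝ (volume : Measure E'))
    have h2 : Integrable (fun x : E' => (1:ℝ) * fderiv ℝ (F j) x (e j)) volume := by
      simpa using hF'int j
    have h3 : Integrable (fun x : E' => (1:ℝ) * F j x) volume := by simpa using hFint j
    have := integral_mul_fderiv_eq_neg_fderiv_mul_of_integrable h1 h2 h3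
      (fun x _ => differentiableAt_const (1:ℝ)) (fun x _ => hFdiff j x)
    simpa [fderiv_fun_const] using this
  have hdivF : ∀ x : E', x ≠ 0 → ∑ j, fderiv ℝ (F j) x (e j) = Φ x * u x k := by
    intro x hx
    have hux : HasFDerivAt u (fderiv ℝ u x) x :=
      ((husm x hx).differentiableAt h1le).hasFDerivAt
    set c : ℝ := deriv ψ ‖x‖ * ‖x‖⁻¹ with hcdef
    have hΦx : HasFDerivAt Φ (c • (innerSL ℝ x : E' →L[ℝ] ℝ)) x := by
      have hn := stmt6_hasFDerivAt_norm (x := x) hx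
      have hp : HasDerivAt ψ (deriv ψ ‖x‖) ‖x‖ :=
        ((hψ.differentiable h1le) ‖x‖).hasDerivAt
      have := hp.comp_hasFDerivAt x hn
      simp only [smul_smul] at this; exact this
    have hFj : ∀ j, HasFDerivAt (F j)
        (Φ x • (P k x • ((P j).comp (fderiv ℝ u x)) + P j (u x) • P k)
          + (P k x * P j (u x)) • (c • (innerSL ℝ x : E' →L[ℝ] ℝ))) x := fun j =>
      hΦx.mul (((P k).hasFDerivAt).mul (((P j).hasFDerivAt).comp x hux))
    have hval : ∀ j, fderiv ℝ (F j) x (e j)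
        = Φ x * (P k x * (fderiv ℝ u x (e j) j)) + Φ x * (P j (u x) * (e j) k)
          + c * ((P k x * P j (u x)) * x j) := by
      intro j
      rw [(hFj j).fderiv]
      have hinner : ⟪x, e j⟫ = x j := by
        simp [hedef, EuclideanSpace.inner_single_right]
      simp only [ContinuousLinearMap.add_apply, ContinuousLinearMap.smul_apply,
        ContinuousLinearMap.coe_comp', Function.comp_apply, hPdef, PiLp.proj_apply,
        smul_eq_mul, innerSL_apply_apply, hinner]
      ring
    have hsum : ∑ j, u x j * x j = 0 := by
      have h := hsph x hx
      rw [PiLp.inner_apply] at h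
      simpa [RCLike.inner_apply, conj_trivial, mul_comm] using h
    rw [Finset.sum_congr rfl fun j _ => hval j, Finset.sum_add_distrib,
      Finset.sum_add_distrib]
    have hs1 : ∑ j, Φ x * (P k x * (fderiv ℝ u x (e j) j)) = 0 := by
      rw [← Finset.mul_sum, ← Finset.mul_sum, hdiv x hx, mul_zero, mul_zero]
    have hs2 : ∑ j, Φ x * (P j (u x) * (e j) k) = Φ x * u x k := by
      simp [hedef, hPdef, PiLp.proj_apply, EuclideanSpace.single_apply, mul_ite, mul_one,
        mul_zero, Finset.sum_ite_eq]
    have hs3 : ∑ j, c * ((P k x * P j (u x)) * x j) = 0 := by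
      have heq : ∑ j, c * ((P k x * P j (u x)) * x j)
          = c * (P k x * ∑ j, u x j * x j) := by
        rw [Finset.mul_sum, Finset.mul_sum]
        refine Finset.sum_congr rfl fun j _ => ?_
        simp only [hPdef, PiLp.proj_apply]; ring
      rw [heq, hsum, mul_zero, mul_zero]
    rw [hs1, hs2, hs3, zero_add, add_zero]
  haveI : Nonempty (Fin N) := ⟨⟨0, hN⟩⟩
  have h0ae : ∀ᵐ x : E' ∂volume, x ≠ 0 := by
    rw [ae_iff]
    simp only [not_not, Set.setOf_eq_eq_singleton]
    exact measure_singleton 0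
  have hae : (fun x : E' => ψ ‖x‖ * u x k) =ᵐ[volume]
      fun x => ∑ j, fderiv ℝ (F j) x (e j) := by
    filter_upwards [h0ae] with x hx
    exact (hdivF x hx).symm
  constructor
  · exact (integrable_finset_sum _ (fun j _ => hF'int j)).congr hae.symm
  · rw [integral_congr_ae hae, integral_finset_sum _ (fun j _ => hF'int j)]
    simp [hIj]

end KeyZero

/-- a smooth spherical (tangential) divergence-free field on
`ℝ^N \ {0}` has zero mean over every sphere. -/
theorem stmt6 (N : ℕ) (hN : 3 ≤ N)
    (u : EuclideanSpace ℝ (Fin N) → EuclideanSpace ℝ (Fin N))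
    (hu : ContDiffOn ℝ (⊤ : ℕ∞) u {(0 : EuclideanSpace ℝ (Fin N))}ᶜ)
    (hsph : ∀ x : EuclideanSpace ℝ (Fin N), x ≠ 0 → ⟪x, u x⟫ = 0)
    (hdiv : ∀ x : EuclideanSpace ℝ (Fin N), x ≠ 0 →
      ∑ k, fderiv ℝ u x (EuclideanSpace.single k 1) k = 0) :
    ∀ r : ℝ, 0 < r →
      (∫ σ : Metric.sphere (0 : EuclideanSpace ℝ (Fin N)) 1,
          u (r • (σ : EuclideanSpace ℝ (Fin N))) ∂(volume.toSphere))
        = 0 := by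
  classical
  intro r hr
  have hNpos : 0 < N := by omega
  haveI : Nonempty (Fin N) := ⟨⟨0, hNpos⟩⟩
  have hu_cont : ContinuousOn u {(0 : EuclideanSpace ℝ (Fin N))}ᶜ := hu.continuousOn
  -- continuity and integrability of σ ↦ u (s • σ)
  have hmem : ∀ (s : ℝ), s ≠ 0 → ∀ σ : Metric.sphere (0 : EuclideanSpace ℝ (Fin N)) 1,
      s • (σ : EuclideanSpace ℝ (Fin N)) ∈ ({(0 : EuclideanSpace ℝ (Fin N))}ᶜ : Set _) := by
    intro s hs σ
    simp only [Set.mem_compl_iff, Set.mem_singleton_iff]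
    exact smul_ne_zero hs (Metric.ne_of_mem_sphere σ.2 one_ne_zero)
  have hcont_sph : ∀ (s : ℝ), s ≠ 0 →
      Continuous (fun σ : Metric.sphere (0 : EuclideanSpace ℝ (Fin N)) 1 =>
        u (s • (σ : EuclideanSpace ℝ (Fin N)))) := by
    intro s hs
    exact hu_cont.comp_continuous (continuous_subtype_val.const_smul s :
      Continuous fun σ : Metric.sphere (0 : EuclideanSpace ℝ (Fin N)) 1 =>
        s • (σ : EuclideanSpace ℝ (Fin N))) (hmem s hs)
  have hint_sph : ∀ (s : ℝ), s ≠ 0 →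
      Integrable (fun σ : Metric.sphere (0 : EuclideanSpace ℝ (Fin N)) 1 =>
        u (s • (σ : EuclideanSpace ℝ (Fin N)))) volume.toSphere := by
    intro s hs
    exact (hcont_sph s hs).integrable_of_hasCompactSupport (HasCompactSupport.of_compactSpace _)
  -- mean value of the k-th coordinate over the sphere of radius s
  set g : Fin N → ℝ → ℝ := fun k s =>
    ∫ σ : Metric.sphere (0 : EuclideanSpace ℝ (Fin N)) 1,
      u (s • (σ : EuclideanSpace ℝ (Fin N))) k ∂volume.toSphere with hgdef
  -- continuity of g k at positive points
  have hgc : ∀ (k : Fin N) (s₀ : ℝ), 0 < s₀ → ContinuousAt (g k) s₀ := by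
    intro k s₀ hs₀
    set A : Set (EuclideanSpace ℝ (Fin N)) :=
      Metric.closedBall 0 (2*s₀) ∩ (Metric.ball 0 (s₀/2))ᶜ with hAdef
    have hAcomp : IsCompact A :=
      (isCompact_closedBall _ _).inter_right (Metric.isOpen_ball).isClosed_compl
    have hAsub : A ⊆ {(0 : EuclideanSpace ℝ (Fin N))}ᶜ := by
      intro x hx
      simp only [Set.mem_compl_iff, Set.mem_singleton_iff]
      intro h0
      rcases hx with ⟨-, hx2⟩
      apply hx2
      simp [h0, Metric.mem_ball, hs₀]
    obtain ⟨C, hC⟩ := hAcomp.exists_bound_of_continuousOn (hu_cont.mono hAsub)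
    apply continuousAt_of_dominated (bound := fun _ => C)
    · filter_upwards [isOpen_Ioi.mem_nhds hs₀] with s hs
      exact ((EuclideanSpace.proj k).continuous.comp
        (hcont_sph s (ne_of_gt hs))).aestronglyMeasurable
    · have hIoo : Set.Ioo (s₀/2) (2*s₀) ∈ nhds s₀ :=
        isOpen_Ioo.mem_nhds ⟨by linarith, by linarith⟩
      filter_upwards [hIoo] with s hs
      apply ae_of_all
      intro σ
      have hσn : ‖(σ : EuclideanSpace ℝ (Fin N))‖ = 1 := mem_sphere_zero_iff_norm.1 σ.2
      have hspos : 0 < s := lt_trans (by linarith) hs.1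
      have hnorm : ‖s • (σ : EuclideanSpace ℝ (Fin N))‖ = s := by
        rw [norm_smul, hσn, mul_one, Real.norm_eq_abs, abs_of_pos hspos]
      have hmemA : s • (σ : EuclideanSpace ℝ (Fin N)) ∈ A := by
        constructor
        · rw [Metric.mem_closedBall, dist_zero_right, hnorm]; exact le_of_lt hs.2
        · intro hmem
          rw [Metric.mem_ball, dist_zero_right, hnorm] at hmem
          linarith [hs.1]
      calc ‖u (s • (σ : EuclideanSpace ℝ (Fin N))) k‖
          = |u (s • (σ : EuclideanSpace ℝ (Fin N))) k| := rfl
        _ ≤ ‖u (s • (σ : EuclideanSpace ℝ (Fin N)))‖ := stmt6_coord_le_norm _ _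
        _ ≤ C := hC _ hmemA
    · exact integrable_const C
    · apply ae_of_all
      intro σ
      have h1 : ContinuousAt (fun s : ℝ => s • (σ : EuclideanSpace ℝ (Fin N))) s₀ :=
        (continuous_id.smul continuous_const).continuousAt
      have h2 : ContinuousAt u (s₀ • (σ : EuclideanSpace ℝ (Fin N))) :=
        hu_cont.continuousAt (isOpen_compl_singleton.mem_nhds (hmem s₀ (ne_of_gt hs₀) σ))
      exact Filter.Tendsto.comp ((EuclideanSpace.proj (𝕜 := ℝ) k).continuous.continuousAt)
        (Filter.Tendsto.comp h2 h1)
  -- distributional vanishing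
  have hdist : ∀ k : Fin N, ∀ᵐ s : ℝ ∂volume,
      s ∈ Set.Ioi (0:ℝ) → s ^ (N-1) * g k s = 0 := by
    intro k
    apply isOpen_Ioi.ae_eq_zero_of_integral_contDiff_smul_eq_zero
      (f := fun s : ℝ => s ^ (N-1) * g k s) (μ := volume)
    · apply ContinuousOn.locallyIntegrableOn _ measurableSet_Ioi
      apply ContinuousOn.mul (continuous_pow (N-1)).continuousOn
      intro s hs
      exact (hgc k s hs).continuousWithinAt
    · intro ψ hψ hψsupp hψsub
      obtain ⟨hkey_int, hkey⟩ := stmt6_key_zero N hNpos u hu hsph hdiv k ψ hψ hψsupp hψsub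
      have hpolar := stmt6_polar_integral (volume : Measure (EuclideanSpace ℝ (Fin N)))
        (fun x => ψ ‖x‖ * u x k) hkey_int
      rw [hkey] at hpolar
      have hinner : Set.EqOn
          (fun s : ℝ => s ^ (Module.finrank ℝ (EuclideanSpace ℝ (Fin N)) - 1) •
            ∫ σ : Metric.sphere (0 : EuclideanSpace ℝ (Fin N)) 1,
              ψ ‖s • (σ : EuclideanSpace ℝ (Fin N))‖ *
                u (s • (σ : EuclideanSpace ℝ (Fin N))) k ∂volume.toSphere)
          (fun s : ℝ => ψ s • (s ^ (N-1) * g k s)) (Set.Ioi 0) := by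
        intro s hs
        have hspos : (0:ℝ) < s := hs
        have hnorm : ∀ σ : Metric.sphere (0 : EuclideanSpace ℝ (Fin N)) 1,
            ‖s • (σ : EuclideanSpace ℝ (Fin N))‖ = s := by
          intro σ
          rw [norm_smul, mem_sphere_zero_iff_norm.1 σ.2, mul_one, Real.norm_eq_abs,
            abs_of_pos hspos]
        have hfun : (fun σ : Metric.sphere (0 : EuclideanSpace ℝ (Fin N)) 1 =>
            ψ ‖s • (σ : EuclideanSpace ℝ (Fin N))‖ * u (s • (σ : EuclideanSpace ℝ (Fin N))) k)
            = fun σ : Metric.sphere (0 : EuclideanSpace ℝ (Fin N)) 1 =>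
              ψ s * u (s • (σ : EuclideanSpace ℝ (Fin N))) k := by
          funext σ; rw [hnorm σ]
        simp only [hfun, finrank_euclideanSpace_fin]
        rw [MeasureTheory.integral_const_mul]
        simp only [smul_eq_mul, hgdef]
        ring
      beta_reduce at hpolar
      rw [setIntegral_congr_fun measurableSet_Ioi hinner] at hpolar
      rw [← setIntegral_eq_integral_of_forall_compl_eq_zero
        (s := Set.Ioi (0:ℝ)) (f := fun s : ℝ => ψ s • (s ^ (N-1) * g k s))]
      · exact hpolar.symm
      · intro s hs
        have : ψ s = 0 := image_eq_zero_of_notMem_tsupport (fun hmem => hs (hψsub hmem))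
        rw [this, zero_smul]
  -- pointwise vanishing at r
  have hzero : ∀ k : Fin N, g k r = 0 := by
    intro k
    have hcontAt : ContinuousAt (fun s : ℝ => s ^ (N-1) * g k s) r :=
      ((continuous_pow (N-1)).continuousAt).mul (hgc k r hr)
    have hhr : r ^ (N-1) * g k r = 0 := by
      by_contra hne
      have hev : ∀ᶠ s in nhds r, s ^ (N-1) * g k s ≠ 0 := hcontAt.eventually_ne hne
      have hIoi : ∀ᶠ s in nhds r, s ∈ Set.Ioi (0:ℝ) := isOpen_Ioi.mem_nhds hr
      obtain ⟨δ, hδ, hballsub⟩ := Metric.eventually_nhds_iff_ball.1 (hev.and hIoi)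
      have hnull : volume {s : ℝ | ¬ (s ∈ Set.Ioi (0:ℝ) → s ^ (N-1) * g k s = 0)} = 0 :=
        ae_iff.1 (hdist k)
      have hsub2 : Metric.ball r δ ⊆
          {s : ℝ | ¬ (s ∈ Set.Ioi (0:ℝ) → s ^ (N-1) * g k s = 0)} := by
        intro s hs
        obtain ⟨h1, h2⟩ := hballsub s hs
        simp only [Set.mem_setOf_eq, Classical.not_imp]
        exact ⟨h2, h1⟩
      have := measure_mono_null hsub2 hnull
      exact absurd this (ne_of_gt (Metric.measure_ball_pos volume r hδ))
    have hrpow : r ^ (N-1) ≠ 0 := pow_ne_zero _ (ne_of_gt hr)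
    exact (mul_eq_zero.1 hhr).resolve_left hrpow
  -- conclude
  have hintr := hint_sph r (ne_of_gt hr)
  apply PiLp.ext
  intro k
  have hcomm := (EuclideanSpace.proj (𝕜 := ℝ) k).integral_comp_comm hintr
  calc (∫ σ : Metric.sphere (0 : EuclideanSpace ℝ (Fin N)) 1,
        u (r • (σ : EuclideanSpace ℝ (Fin N))) ∂volume.toSphere) k
      = ∫ σ : Metric.sphere (0 : EuclideanSpace ℝ (Fin N)) 1,
          (EuclideanSpace.proj (𝕜 := ℝ) k) (u (r • (σ : EuclideanSpace ℝ (Fin N))))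
            ∂volume.toSphere := hcomm.symm
    _ = g k r := rfl
    _ = 0 := hzero k
end

section
/- Let v = x g(x) + ∇f(x) (a 'pre-poloidal' field, f, g smooth scalar fields on ℝ^N \ {0}) and let w be a smooth vector field on ℝ^N \ {0} with x · w = 0 and div w = 0 ('toroidal'). Then for every r > 0, ∫_{S^{N-1}} v(rσ) · w(rσ) dσ = 0. -/
open MeasureTheory
open scoped RealInnerProductSpace BigOperators

open Metric Set Function
open scoped ContDiff

noncomputable section

namespace Stmt8Aux

lemma polar {N : ℕ} (hN : 0 < N) (U : EuclideanSpace ℝ (Fin N) → ℝ)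
    (hU : Integrable U (volume : Measure (EuclideanSpace ℝ (Fin N)))) :
    (∫ x, U x) = ∫ t in Ioi (0:ℝ), t ^ (N - 1) *
      ∫ σ : sphere (0 : EuclideanSpace ℝ (Fin N)) 1,
        U (t • (σ : EuclideanSpace ℝ (Fin N))) ∂(volume.toSphere) := by
  haveI : Nontrivial (EuclideanSpace ℝ (Fin N)) := by
    refine ⟨EuclideanSpace.single (⟨0, hN⟩ : Fin N) (1:ℝ), 0, fun h => ?_⟩
    have := congrArg (fun z : EuclideanSpace ℝ (Fin N) => z ⟨0, hN⟩) h
    simp [EuclideanSpace.single_apply] at this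
  have hdim : Module.finrank ℝ (EuclideanSpace ℝ (Fin N)) = N := finrank_euclideanSpace_fin
  set μ : Measure (EuclideanSpace ℝ (Fin N)) := volume with hμdef
  set G : sphere (0 : EuclideanSpace ℝ (Fin N)) 1 × Ioi (0:ℝ) → ℝ :=
    fun p => U ((p.2 : ℝ) • (p.1 : EuclideanSpace ℝ (Fin N))) with hGdef
  have hmapcomap : (μ.comap (Subtype.val :
      ({(0 : EuclideanSpace ℝ (Fin N))}ᶜ : Set _) → EuclideanSpace ℝ (Fin N))).map Subtype.val
      = μ := by
    rw [map_comap_subtype_coe (measurableSet_singleton _).compl,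
      restrict_compl_singleton]
  have hint_comap : Integrable
      (fun x : ({(0 : EuclideanSpace ℝ (Fin N))}ᶜ : Set _) => U x.1) (μ.comap Subtype.val) := by
    have h2 := (MeasurableEmbedding.subtype_coe
      (measurableSet_singleton (0 : EuclideanSpace ℝ (Fin N))).compl).integrable_map_iff
      (g := U) (μ := μ.comap Subtype.val)
    rw [hmapcomap] at h2
    exact h2.1 hU
  have hcomp : ∀ x : ({(0 : EuclideanSpace ℝ (Fin N))}ᶜ : Set _),
      G (homeomorphUnitSphereProd (EuclideanSpace ℝ (Fin N)) x) = U x.1 := by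
    intro x
    have hx : (x : EuclideanSpace ℝ (Fin N)) ≠ 0 := x.2
    simp only [hGdef, homeomorphUnitSphereProd_apply_snd_coe,
      homeomorphUnitSphereProd_apply_fst_coe]
    rw [smul_smul, mul_inv_cancel₀ (norm_ne_zero_iff.2 hx), one_smul]
  have hGint : Integrable G
      (μ.toSphere.prod (Measure.volumeIoiPow (Module.finrank ℝ (EuclideanSpace ℝ (Fin N)) - 1))) := by
    refine ((μ.measurePreserving_homeomorphUnitSphereProd.integrable_comp_emb
      (Homeomorph.measurableEmbedding _)).1 ?_)
    have : (G ∘ (homeomorphUnitSphereProd (EuclideanSpace ℝ (Fin N)))) =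
        fun x : ({(0 : EuclideanSpace ℝ (Fin N))}ᶜ : Set _) => U x.1 := funext hcomp
    rw [this]
    exact hint_comap
  calc ∫ x, U x ∂μ
      = ∫ x : ({(0 : EuclideanSpace ℝ (Fin N))}ᶜ : Set _), U x.1 ∂(μ.comap Subtype.val) := by
        rw [integral_subtype_comap (measurableSet_singleton _).compl,
          restrict_compl_singleton]
    _ = ∫ x : ({(0 : EuclideanSpace ℝ (Fin N))}ᶜ : Set _),
          G (homeomorphUnitSphereProd (EuclideanSpace ℝ (Fin N)) x) ∂(μ.comap Subtype.val) :=
        (integral_congr_ae (Filter.Eventually.of_forall fun x => (hcomp x).symm))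
    _ = ∫ p, G p ∂(μ.toSphere.prod
          (Measure.volumeIoiPow (Module.finrank ℝ (EuclideanSpace ℝ (Fin N)) - 1))) :=
        μ.measurePreserving_homeomorphUnitSphereProd.integral_comp
          (Homeomorph.measurableEmbedding _) G
    _ = ∫ t : Ioi (0:ℝ), (∫ σ : sphere (0 : EuclideanSpace ℝ (Fin N)) 1,
          G (σ, t) ∂μ.toSphere) ∂(Measure.volumeIoiPow
            (Module.finrank ℝ (EuclideanSpace ℝ (Fin N)) - 1)) :=
        integral_prod_symm G hGint
    _ = ∫ t : Ioi (0:ℝ), ((t:ℝ) ^ (N - 1)).toNNReal •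
          (∫ σ : sphere (0 : EuclideanSpace ℝ (Fin N)) 1,
            U ((t:ℝ) • (σ : EuclideanSpace ℝ (Fin N))) ∂μ.toSphere)
          ∂(Measure.comap Subtype.val volume) := by
        rw [hdim]
        simp only [Measure.volumeIoiPow, ENNReal.ofReal]
        rw [integral_withDensity_eq_integral_smul
          ((measurable_subtype_coe.pow_const _).real_toNNReal)]
    _ = ∫ t in Ioi (0:ℝ), ((t) ^ (N - 1)).toNNReal •
          (∫ σ : sphere (0 : EuclideanSpace ℝ (Fin N)) 1,
            U (t • (σ : EuclideanSpace ℝ (Fin N))) ∂μ.toSphere) :=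
        integral_subtype_comap measurableSet_Ioi
          (fun t : ℝ => ((t) ^ (N - 1)).toNNReal •
            (∫ σ : sphere (0 : EuclideanSpace ℝ (Fin N)) 1,
              U (t • (σ : EuclideanSpace ℝ (Fin N))) ∂μ.toSphere))
    _ = ∫ t in Ioi (0:ℝ), t ^ (N - 1) * ∫ σ : sphere (0 : EuclideanSpace ℝ (Fin N)) 1,
          U (t • (σ : EuclideanSpace ℝ (Fin N))) ∂(volume.toSphere) := by
        refine setIntegral_congr_fun measurableSet_Ioi fun t ht => ?_
        rw [NNReal.smul_def, Real.coe_toNNReal _ (pow_nonneg (le_of_lt ht) _), smul_eq_mul]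


lemma one_le_inf : ((⊤ : ℕ∞) : WithTop ℕ∞) ≠ 0 := by
  simp

lemma eucl_decomp {N : ℕ} (z : EuclideanSpace ℝ (Fin N)) :
    ∑ k, z k • EuclideanSpace.single k (1:ℝ) = z := by
  classical
  simpa [EuclideanSpace.basisFun_apply, EuclideanSpace.basisFun_repr] using
    (EuclideanSpace.basisFun (Fin N) ℝ).sum_repr z

lemma key {N : ℕ}
    (f : EuclideanSpace ℝ (Fin N) → ℝ)
    (hf : ContDiffOn ℝ (⊤ : ℕ∞) f {(0 : EuclideanSpace ℝ (Fin N))}ᶜ)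
    (w : EuclideanSpace ℝ (Fin N) → EuclideanSpace ℝ (Fin N))
    (hw : ContDiffOn ℝ (⊤ : ℕ∞) w {(0 : EuclideanSpace ℝ (Fin N))}ᶜ)
    (hwsph : ∀ x : EuclideanSpace ℝ (Fin N), x ≠ 0 → ⟪x, w x⟫ = 0)
    (hwdiv : ∀ x : EuclideanSpace ℝ (Fin N), x ≠ 0 →
      ∑ k, fderiv ℝ w x (EuclideanSpace.single k 1) k = 0)
    (χ : ℝ → ℝ) (hχ : ContDiff ℝ ∞ χ) (hχc : HasCompactSupport χ)
    (hχs : tsupport χ ⊆ Ioi 0) :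
    ∫ x, χ ‖x‖ * ⟪gradient f x, w x⟫ = 0 := by
  classical
  -- χ vanishes below some positive threshold
  obtain ⟨ε₀, hε₀, hχ0⟩ : ∃ ε₀ > (0:ℝ), ∀ t : ℝ, t < ε₀ → χ t = 0 := by
    rcases eq_or_ne (tsupport χ) ∅ with h | h
    · exact ⟨1, one_pos, fun t _ => image_eq_zero_of_notMem_tsupport (by simp [h])⟩
    · have hne : (tsupport χ).Nonempty := nonempty_iff_ne_empty.2 h
      have hmem := hχc.isCompact.sInf_mem hne
      refine ⟨sInf (tsupport χ), hχs hmem, fun t ht => ?_⟩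
      refine image_eq_zero_of_notMem_tsupport fun hmem' => ?_
      exact absurd (csInf_le hχc.isCompact.bddBelow hmem') (not_le.2 ht)
  set u : EuclideanSpace ℝ (Fin N) → ℝ := fun x => ⟪gradient f x, w x⟫ with hu
  set ψ : ℝ → ℝ := fun t => χ (Real.sqrt t) with hψ
  set η : EuclideanSpace ℝ (Fin N) → ℝ :=
    fun x => χ (Real.sqrt (inner ℝ x x : ℝ)) with hη
  have hηnorm : ∀ x : EuclideanSpace ℝ (Fin N), η x = χ ‖x‖ := by
    intro x
    rw [hη]
    simp only
    rw [real_inner_self_eq_norm_mul_norm, Real.sqrt_mul_self (norm_nonneg x)]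
  have hη0 : ∀ x : EuclideanSpace ℝ (Fin N), ‖x‖ < ε₀ → η x = 0 := fun x hx => by
    rw [hηnorm]; exact hχ0 _ hx
  -- differentiability of η away from zero
  have hinner : ContDiff ℝ ∞ (fun y : EuclideanSpace ℝ (Fin N) => (inner ℝ y y : ℝ)) :=
    (contDiff_id.inner ℝ contDiff_id)
  have hηsmooth : ∀ x : EuclideanSpace ℝ (Fin N), x ≠ 0 → ContDiffAt ℝ ∞ η x := by
    intro x hx
    have hpos : (0:ℝ) < (inner ℝ x x : ℝ) := lt_of_le_of_ne real_inner_self_nonneg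
      (Ne.symm ((inner_self_ne_zero (𝕜 := ℝ)).2 hx))
    have h1 : ContDiffAt ℝ ∞ (fun t : ℝ => χ (Real.sqrt t)) ((inner ℝ x x : ℝ)) :=
      ContDiffAt.comp (𝕜 := ℝ) (g := χ) (f := fun t : ℝ => Real.sqrt t) _
        hχ.contDiffAt (Real.contDiffAt_sqrt hpos.ne')
    exact ContDiffAt.comp (𝕜 := ℝ) (g := fun t : ℝ => χ (Real.sqrt t))
      (f := fun y : EuclideanSpace ℝ (Fin N) => (inner ℝ y y : ℝ)) x h1 hinner.contDiffAt
  set X : EuclideanSpace ℝ (Fin N) → EuclideanSpace ℝ (Fin N) :=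
    fun x => (η x * f x) • w x with hX
  have hXzero : ∀ y : EuclideanSpace ℝ (Fin N), ‖y‖ < ε₀ → X y = 0 := by
    intro y hy
    rw [hX]; simp only [hη0 y hy, zero_mul, zero_smul]
  have hXsmooth : ContDiff ℝ ∞ X := by
    rw [contDiff_iff_contDiffAt]
    intro x
    by_cases hx : ‖x‖ < ε₀
    · refine (contDiffAt_const (c := (0:EuclideanSpace ℝ (Fin N)))).congr_of_eventuallyEq ?_
      refine Filter.eventually_of_mem (Metric.ball_mem_nhds x (by linarith [norm_nonneg x] : (0:ℝ) < ε₀ - ‖x‖)) ?_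
      intro y hy
      refine hXzero y ?_
      have := mem_ball_iff_norm.1 hy
      calc ‖y‖ ≤ ‖y - x‖ + ‖x‖ := by simpa using norm_add_le (y - x) x
        _ < ε₀ := by linarith
    · have hx0 : x ≠ 0 := by
        intro h
        rw [h, norm_zero] at hx; exact hx hε₀
      have hmem : {(0 : EuclideanSpace ℝ (Fin N))}ᶜ ∈ nhds x :=
        isOpen_compl_singleton.mem_nhds hx0
      have hfx : ContDiffAt ℝ ∞ f x := (hf.contDiffAt hmem).of_le (by simp)
      have hwx : ContDiffAt ℝ ∞ w x := (hw.contDiffAt hmem).of_le (by simp)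
      exact ((hηsmooth x hx0).mul hfx).smul hwx
  have hXsupp : HasCompactSupport X := by
    obtain ⟨R, hR⟩ : ∃ R, tsupport χ ⊆ closedBall (0:ℝ) R :=
      hχc.isCompact.isBounded.subset_closedBall 0
    have hclosed : IsClosed (norm ⁻¹' tsupport χ : Set (EuclideanSpace ℝ (Fin N))) :=
      (isClosed_tsupport χ).preimage continuous_norm
    have hsub : (norm ⁻¹' tsupport χ : Set (EuclideanSpace ℝ (Fin N))) ⊆ closedBall 0 R := by
      intro x hx
      have := hR hx
      rw [Real.closedBall_eq_Icc] at this
      exact mem_closedBall_zero_iff.2 (by simpa using this.2)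
    refine HasCompactSupport.of_support_subset_isCompact
      ((isCompact_closedBall (0 : EuclideanSpace ℝ (Fin N)) R).of_isClosed_subset hclosed hsub) ?_
    intro x hx
    by_contra h
    have hzero : χ ‖x‖ = 0 := image_eq_zero_of_notMem_tsupport h
    apply hx
    rw [hX]
    simp only [hηnorm, hzero, zero_mul, zero_smul]
  -- coordinates of X
  have hXk : ∀ k : Fin N, ContDiff ℝ ∞ (fun y => X y k) := by
    intro k
    exact (EuclideanSpace.proj k).contDiff.comp hXsmooth
  have hXkcs : ∀ k : Fin N, HasCompactSupport (fun y => X y k) := by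
    intro k
    exact hXsupp.comp_left (g := fun z : EuclideanSpace ℝ (Fin N) => z k) rfl
  have hintk : ∀ k : Fin N, Integrable
      (fun x => fderiv ℝ (fun y => X y k) x (EuclideanSpace.single k 1)) (volume) := by
    intro k
    have hc : Continuous (fun x => fderiv ℝ (fun y => X y k) x (EuclideanSpace.single k 1)) := by
      exact ((hXk k).continuous_fderiv one_le_inf).clm_apply continuous_const
    have hs : HasCompactSupport
        (fun x => fderiv ℝ (fun y => X y k) x (EuclideanSpace.single k 1)) :=
      ((hXkcs k).fderiv (𝕜 := ℝ)).comp_left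
        (g := fun L : EuclideanSpace ℝ (Fin N) →L[ℝ] ℝ => L (EuclideanSpace.single k 1)) rfl
    exact hc.integrable_of_hasCompactSupport hs
  have hibp : ∀ k : Fin N,
      ∫ x, fderiv ℝ (fun y => X y k) x (EuclideanSpace.single k 1) = 0 := by
    intro k
    have h1 := integral_mul_fderiv_eq_neg_fderiv_mul_of_integrable (μ := volume)
      (f := fun y => X y k) (g := fun _ => (1:ℝ)) (v := EuclideanSpace.single k 1)
      ?_ ?_ ?_ ?_ ?_
    · simp only [fderiv_fun_const, Pi.zero_apply, ContinuousLinearMap.zero_apply, mul_zero,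
        mul_one, integral_zero] at h1
      linarith [h1]
    · simpa only [mul_one] using hintk k
    · simp only [fderiv_fun_const, Pi.zero_apply, ContinuousLinearMap.zero_apply, mul_zero]
      exact integrable_zero _ _ _
    · simpa only [mul_one] using
        ((hXk k).continuous.integrable_of_hasCompactSupport (hXkcs k))
    · exact fun x _ => (hXk k).differentiable one_le_inf x
    · exact fun x _ => differentiableAt_const _
  -- the divergence identity
  have hdiv : ∀ x : EuclideanSpace ℝ (Fin N),
      (∑ k, fderiv ℝ (fun y => X y k) x (EuclideanSpace.single k 1)) = η x * u x := by
    intro x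
    by_cases hx : ‖x‖ < ε₀
    · have hev : ∀ᶠ y in nhds x, X y = 0 := by
        refine Filter.eventually_of_mem (Metric.ball_mem_nhds x
          (by linarith [norm_nonneg x] : (0:ℝ) < ε₀ - ‖x‖)) ?_
        intro y hy
        refine hXzero y ?_
        have := mem_ball_iff_norm.1 hy
        calc ‖y‖ ≤ ‖y - x‖ + ‖x‖ := by simpa using norm_add_le (y - x) x
          _ < ε₀ := by linarith
      have hk0 : ∀ k : Fin N, fderiv ℝ (fun y => X y k) x = 0 := by
        intro k
        have hevk : (fun y => X y k) =ᶠ[nhds x] (fun _ => (0:ℝ)) := by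
          filter_upwards [hev] with y hy
          rw [hy]; rfl
        rw [hevk.fderiv_eq, fderiv_fun_const]
        rfl
      simp only [hk0, ContinuousLinearMap.zero_apply, Finset.sum_const_zero,
        hη0 x hx, zero_mul]
    · have hx0 : x ≠ 0 := by
        intro h; rw [h, norm_zero] at hx; exact hx hε₀
      have hmem : {(0 : EuclideanSpace ℝ (Fin N))}ᶜ ∈ nhds x :=
        isOpen_compl_singleton.mem_nhds hx0
      have hfd : DifferentiableAt ℝ f x :=
        ((hf.contDiffAt hmem).of_le (by simp)).differentiableAt one_le_inf
      have hwd : DifferentiableAt ℝ w x :=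
        ((hw.contDiffAt hmem).of_le (by simp)).differentiableAt one_le_inf
      have hηd : DifferentiableAt ℝ η x := (hηsmooth x hx0).differentiableAt one_le_inf
      have hφd : DifferentiableAt ℝ (fun y => η y * f y) x := hηd.mul hfd
      have hwk : ∀ k : Fin N, fderiv ℝ (fun y => w y k) x =
          (EuclideanSpace.proj k).comp (fderiv ℝ w x) := by
        intro k
        exact ((EuclideanSpace.proj k).hasFDerivAt.comp x hwd.hasFDerivAt).fderiv
      have hXkeq : ∀ k : Fin N, (fun y => X y k) =
          fun y => (η y * f y) * w y k := by
        intro k; rfl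
      have hstep : ∀ k : Fin N,
          fderiv ℝ (fun y => X y k) x (EuclideanSpace.single k 1) =
            (η x * f x) * fderiv ℝ w x (EuclideanSpace.single k 1) k +
            w x k * fderiv ℝ (fun y => η y * f y) x (EuclideanSpace.single k 1) := by
        intro k
        rw [hXkeq k]
        have hwdk : DifferentiableAt ℝ (fun y => w y k) x := by
          have h3 := (EuclideanSpace.proj (𝕜 := ℝ) k).differentiableAt.comp x hwd
          simpa [Function.comp_def] using h3
        rw [fderiv_fun_mul hφd hwdk]
        simp only [ContinuousLinearMap.add_apply, ContinuousLinearMap.coe_smul',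
          Pi.smul_apply, smul_eq_mul]
        rw [hwk k]
        rfl
      rw [Finset.sum_congr rfl fun k _ => hstep k]
      rw [Finset.sum_add_distrib, ← Finset.mul_sum, hwdiv x hx0, mul_zero, zero_add]
      -- second sum equals fderiv φ x (w x)
      have hsum2 : ∑ k, w x k * fderiv ℝ (fun y => η y * f y) x (EuclideanSpace.single k 1)
          = fderiv ℝ (fun y => η y * f y) x (w x) := by
        conv_rhs => rw [← eucl_decomp (w x)]
        rw [map_sum]
        refine Finset.sum_congr rfl fun k _ => ?_
        rw [_root_.map_smul, smul_eq_mul]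
      rw [hsum2, fderiv_fun_mul hηd hfd]
      simp only [ContinuousLinearMap.add_apply, ContinuousLinearMap.coe_smul',
        Pi.smul_apply, smul_eq_mul]
      have hηzero : fderiv ℝ η x (w x) = 0 := by
        have hsd : DifferentiableAt ℝ
            (fun y : EuclideanSpace ℝ (Fin N) => (inner ℝ y y : ℝ)) x :=
          hinner.differentiable one_le_inf x
        have hpos : (0:ℝ) < (inner ℝ x x : ℝ) := lt_of_le_of_ne real_inner_self_nonneg
          (Ne.symm ((inner_self_ne_zero (𝕜 := ℝ)).2 hx0))
        have hψd : DifferentiableAt ℝ ψ ((inner ℝ x x : ℝ)) := by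
          have h1 : DifferentiableAt ℝ Real.sqrt ((inner ℝ x x : ℝ)) :=
            (Real.contDiffAt_sqrt (n := 1) hpos.ne').differentiableAt one_ne_zero
          exact DifferentiableAt.comp (𝕜 := ℝ) (g := χ) (f := Real.sqrt) _
            ((hχ.differentiable one_le_inf) _) h1
        have hηeq : η = (ψ ∘ fun y : EuclideanSpace ℝ (Fin N) => (inner ℝ y y : ℝ)) := rfl
        have hcomp : fderiv ℝ η x =
            (fderiv ℝ ψ ((inner ℝ x x : ℝ))).comp
              (fderiv ℝ (fun y : EuclideanSpace ℝ (Fin N) => (inner ℝ y y : ℝ)) x) := by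
          rw [hηeq]
          exact fderiv_comp x hψd hsd
        rw [hcomp]
        simp only [ContinuousLinearMap.coe_comp', Function.comp_apply]
        have hs0 : fderiv ℝ (fun y : EuclideanSpace ℝ (Fin N) => (inner ℝ y y : ℝ)) x (w x)
            = 0 := by
          have h2 := fderiv_inner_apply (𝕜 := ℝ) (x := x)
            (f := fun y : EuclideanSpace ℝ (Fin N) => y)
            (g := fun y : EuclideanSpace ℝ (Fin N) => y)
            differentiableAt_fun_id differentiableAt_fun_id (w x)
          simp only [fderiv_id', ContinuousLinearMap.coe_id', id_eq] at h2
          rw [h2, hwsph x hx0, real_inner_comm, hwsph x hx0, add_zero]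
        rw [hs0, map_zero]
      have hfgrad : fderiv ℝ f x (w x) = u x := by
        rw [hu]
        simp only [gradient]
        rw [InnerProductSpace.toDual_symm_apply]
      rw [hηzero, mul_zero, add_zero, hfgrad]
  have hfinal : ∫ x, η x * u x = 0 := by
    have h1 : (∫ x, (∑ k, fderiv ℝ (fun y => X y k) x (EuclideanSpace.single k 1))) = 0 := by
      rw [integral_finset_sum _ (fun k _ => hintk k)]
      simp [hibp]
    rw [← h1]
    exact integral_congr_ae (Filter.Eventually.of_forall fun x => (hdiv x).symm)
  calc ∫ x, χ ‖x‖ * u x = ∫ x, η x * u x :=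
        integral_congr_ae (Filter.Eventually.of_forall fun x =>
          show χ ‖x‖ * u x = η x * u x by rw [hηnorm])
    _ = 0 := hfinal


lemma chi_small {χ : ℝ → ℝ} (hχc : HasCompactSupport χ) (hχs : tsupport χ ⊆ Ioi 0) :
    ∃ ε₀ > (0:ℝ), ∀ t : ℝ, t < ε₀ → χ t = 0 := by
  rcases eq_or_ne (tsupport χ) ∅ with h | h
  · exact ⟨1, one_pos, fun t _ => image_eq_zero_of_notMem_tsupport (by simp [h])⟩
  · have hne : (tsupport χ).Nonempty := nonempty_iff_ne_empty.2 h
    have hmem := hχc.isCompact.sInf_mem hne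
    refine ⟨sInf (tsupport χ), hχs hmem, fun t ht => ?_⟩
    refine image_eq_zero_of_notMem_tsupport fun hmem' => ?_
    exact absurd (csInf_le hχc.isCompact.bddBelow hmem') (not_le.2 ht)

lemma hascompact_of_chi {N : ℕ} (χ : ℝ → ℝ) (hχc : HasCompactSupport χ)
    (φ : EuclideanSpace ℝ (Fin N) → ℝ) (h : ∀ x, χ ‖x‖ = 0 → φ x = 0) :
    HasCompactSupport φ := by
  obtain ⟨R, hR⟩ : ∃ R, tsupport χ ⊆ closedBall (0:ℝ) R :=
    hχc.isCompact.isBounded.subset_closedBall 0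
  have hclosed : IsClosed (norm ⁻¹' tsupport χ : Set (EuclideanSpace ℝ (Fin N))) :=
    (isClosed_tsupport χ).preimage continuous_norm
  have hsub : (norm ⁻¹' tsupport χ : Set (EuclideanSpace ℝ (Fin N))) ⊆ closedBall 0 R := by
    intro x hx
    have := hR hx
    rw [Real.closedBall_eq_Icc] at this
    exact mem_closedBall_zero_iff.2 (by simpa using this.2)
  refine HasCompactSupport.of_support_subset_isCompact
    ((isCompact_closedBall (0 : EuclideanSpace ℝ (Fin N)) R).of_isClosed_subset hclosed hsub) ?_
  intro x hx
  by_contra hmem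
  exact hx (h x (image_eq_zero_of_notMem_tsupport hmem))


end Stmt8Aux

open Stmt8Aux

/-- pre-poloidal fields are `L²(S^{N-1})`-orthogonal to toroidal
fields at every radius. -/
theorem stmt8 (N : ℕ) (hN : 3 ≤ N)
    (f g : EuclideanSpace ℝ (Fin N) → ℝ)
    (hf : ContDiffOn ℝ (⊤ : ℕ∞) f {(0 : EuclideanSpace ℝ (Fin N))}ᶜ)
    (hg : ContDiffOn ℝ (⊤ : ℕ∞) g {(0 : EuclideanSpace ℝ (Fin N))}ᶜ)
    (v : EuclideanSpace ℝ (Fin N) → EuclideanSpace ℝ (Fin N))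
    (hv : ∀ x : EuclideanSpace ℝ (Fin N), x ≠ 0 → v x = g x • x + gradient f x)
    (w : EuclideanSpace ℝ (Fin N) → EuclideanSpace ℝ (Fin N))
    (hw : ContDiffOn ℝ (⊤ : ℕ∞) w {(0 : EuclideanSpace ℝ (Fin N))}ᶜ)
    (hwsph : ∀ x : EuclideanSpace ℝ (Fin N), x ≠ 0 → ⟪x, w x⟫ = 0)
    (hwdiv : ∀ x : EuclideanSpace ℝ (Fin N), x ≠ 0 →
      ∑ k, fderiv ℝ w x (EuclideanSpace.single k 1) k = 0) :
    ∀ r : ℝ, 0 < r →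
      (∫ σ : Metric.sphere (0 : EuclideanSpace ℝ (Fin N)) 1,
          ⟪v (r • (σ : EuclideanSpace ℝ (Fin N))),
            w (r • (σ : EuclideanSpace ℝ (Fin N)))⟫ ∂(volume.toSphere))
        = 0 := by
  intro r hr
  classical
  have hN0 : 0 < N := lt_of_lt_of_le (by norm_num) hN
  set u : EuclideanSpace ℝ (Fin N) → ℝ := fun x => ⟪gradient f x, w x⟫ with hu
  -- continuity of u away from the origin
  have hfder : ContinuousOn (fderiv ℝ f) {(0 : EuclideanSpace ℝ (Fin N))}ᶜ :=
    hf.continuousOn_fderiv_of_isOpen isOpen_compl_singleton (by simp)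
  have hgradcont : ContinuousOn (fun y => gradient f y) {(0 : EuclideanSpace ℝ (Fin N))}ᶜ := by
    have h1 : (fun y : EuclideanSpace ℝ (Fin N) => gradient f y) =
        fun y => (InnerProductSpace.toDual ℝ (EuclideanSpace ℝ (Fin N))).symm (fderiv ℝ f y) :=
      rfl
    rw [h1]
    exact (InnerProductSpace.toDual ℝ
      (EuclideanSpace ℝ (Fin N))).symm.continuous.comp_continuousOn hfder
  have hucont : ContinuousOn u {(0 : EuclideanSpace ℝ (Fin N))}ᶜ :=
    ContinuousOn.inner hgradcont hw.continuousOn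
  set F : ℝ → ℝ := fun t => ∫ σ : sphere (0 : EuclideanSpace ℝ (Fin N)) 1,
    u (t • (σ : EuclideanSpace ℝ (Fin N))) ∂(volume.toSphere) with hF
  -- main identity for test functions
  have key2 : ∀ χ : ℝ → ℝ, ContDiff ℝ ∞ χ → HasCompactSupport χ → tsupport χ ⊆ Ioi 0 →
      ∫ t in Ioi (0:ℝ), χ t • (t ^ (N-1) * F t) = 0 := by
    intro χ hχ hχc hχs
    obtain ⟨ε₀, hε₀, hχ0⟩ := chi_small hχc hχs
    have hUUcont : Continuous (fun x : EuclideanSpace ℝ (Fin N) => χ ‖x‖ * u x) := by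
      rw [continuous_iff_continuousAt]
      intro x
      by_cases hx : ‖x‖ < ε₀
      · refine ContinuousAt.congr (continuousAt_const (y := (0:ℝ))) ?_
        refine Filter.eventually_of_mem (Metric.ball_mem_nhds x
          (by linarith [norm_nonneg x] : (0:ℝ) < ε₀ - ‖x‖)) ?_
        intro y hy
        have hny : ‖y‖ < ε₀ := by
          have := mem_ball_iff_norm.1 hy
          calc ‖y‖ ≤ ‖y - x‖ + ‖x‖ := by simpa using norm_add_le (y - x) x
            _ < ε₀ := by linarith
        simp [hχ0 _ hny]
      · have hx0 : x ≠ 0 := by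
          intro h; rw [h, norm_zero] at hx; exact hx hε₀
        exact ((hχ.continuous.comp continuous_norm).continuousAt).mul
          (hucont.continuousAt (isOpen_compl_singleton.mem_nhds hx0))
    have hUUint : Integrable (fun x : EuclideanSpace ℝ (Fin N) => χ ‖x‖ * u x) volume := by
      refine hUUcont.integrable_of_hasCompactSupport ?_
      exact hascompact_of_chi χ hχc _ (fun x hx => by rw [hx, zero_mul])
    have h0 : ∫ x, χ ‖x‖ * u x = 0 := key f hf w hw hwsph hwdiv χ hχ hχc hχs
    have hp := polar hN0 (fun x => χ ‖x‖ * u x) hUUint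
    rw [h0] at hp
    have hcong : ∀ t ∈ Ioi (0:ℝ),
        t ^ (N-1) * (∫ σ : sphere (0 : EuclideanSpace ℝ (Fin N)) 1,
          χ ‖t • (σ : EuclideanSpace ℝ (Fin N))‖ * u (t • (σ : EuclideanSpace ℝ (Fin N)))
            ∂(volume.toSphere))
        = χ t • (t ^ (N-1) * F t) := by
      intro t ht
      have ht' : (0:ℝ) < t := ht
      have hnorm : ∀ σ : sphere (0 : EuclideanSpace ℝ (Fin N)) 1,
          ‖t • (σ : EuclideanSpace ℝ (Fin N))‖ = t := by
        intro σ
        rw [norm_smul]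
        simp [mem_sphere_zero_iff_norm.1 σ.2, abs_of_pos ht']
      have heq : (fun σ : sphere (0 : EuclideanSpace ℝ (Fin N)) 1 =>
          χ ‖t • (σ : EuclideanSpace ℝ (Fin N))‖ * u (t • (σ : EuclideanSpace ℝ (Fin N)))) =
          fun σ : sphere (0 : EuclideanSpace ℝ (Fin N)) 1 =>
            χ t * u (t • (σ : EuclideanSpace ℝ (Fin N))) := by
        funext σ; rw [hnorm σ]
      rw [heq, integral_const_mul]
      simp only [smul_eq_mul, hF]
      ring
    rw [← setIntegral_congr_fun measurableSet_Ioi hcong]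
    exact hp.symm
  -- continuity of F at positive radii
  have hFcont : ∀ t : ℝ, 0 < t → ContinuousAt F t := by
    intro t₀ ht₀
    obtain ⟨C, hC⟩ : ∃ C, ∀ y ∈ (closedBall (0 : EuclideanSpace ℝ (Fin N)) (2*t₀)
        \ ball 0 (t₀/2)), ‖u y‖ ≤ C := by
      refine IsCompact.exists_bound_of_continuousOn
        ((isCompact_closedBall _ _).diff isOpen_ball) (hucont.mono ?_)
      intro y hy
      have h1 : ¬ (‖y‖ < t₀/2) := fun h => hy.2 (mem_ball_zero_iff.2 h)
      intro h0
      rw [h0, norm_zero] at h1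
      exact h1 (by linarith)
    have hmemIoo : Ioo (t₀/2) (2*t₀) ∈ nhds t₀ :=
      Ioo_mem_nhds (by linarith) (by linarith)
    have hnormσ : ∀ σ : sphere (0 : EuclideanSpace ℝ (Fin N)) 1,
        ‖(σ : EuclideanSpace ℝ (Fin N))‖ = 1 := fun σ => mem_sphere_zero_iff_norm.1 σ.2
    refine continuousAt_of_dominated (bound := fun _ => C) ?_ ?_ (integrable_const _) ?_
    · filter_upwards [hmemIoo] with t ht
      refine Continuous.aestronglyMeasurable ?_
      refine hucont.comp_continuous (continuous_subtype_val.const_smul t) ?_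
      intro σ
      have hσnz : (σ : EuclideanSpace ℝ (Fin N)) ≠ 0 := ne_of_mem_sphere σ.2 one_ne_zero
      have htpos : (0:ℝ) < t := lt_trans (by linarith) ht.1
      exact smul_ne_zero htpos.ne' hσnz
    · filter_upwards [hmemIoo] with t ht
      refine Filter.Eventually.of_forall fun σ => hC _ ?_
      have hts : ‖t • (σ : EuclideanSpace ℝ (Fin N))‖ = |t| := by
        rw [norm_smul, hnormσ σ]; simp
      have htpos : (0:ℝ) < t := lt_trans (by linarith) ht.1
      constructor
      · exact mem_closedBall_zero_iff.2 (by rw [hts, abs_of_pos htpos]; linarith [ht.2])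
      · intro hball
        have := mem_ball_zero_iff.1 hball
        rw [hts, abs_of_pos htpos] at this
        linarith [ht.1]
    · refine Filter.Eventually.of_forall fun σ => ?_
      have hσnz : (σ : EuclideanSpace ℝ (Fin N)) ≠ 0 := ne_of_mem_sphere σ.2 one_ne_zero
      have hσ0 : t₀ • (σ : EuclideanSpace ℝ (Fin N)) ≠ 0 := smul_ne_zero ht₀.ne' hσnz
      have hsm : ContinuousAt (fun t : ℝ => t • (σ : EuclideanSpace ℝ (Fin N))) t₀ :=
        (continuous_id.smul continuous_const).continuousAt
      show ContinuousAt
        (fun t : ℝ => u (t • (σ : EuclideanSpace ℝ (Fin N)))) t₀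
      exact ContinuousAt.comp (g := u)
        (f := fun t : ℝ => t • (σ : EuclideanSpace ℝ (Fin N)))
        (hucont.continuousAt (isOpen_compl_singleton.mem_nhds hσ0)) hsm
  -- test-function argument
  have hae := (isOpen_Ioi (a := (0:ℝ))).ae_eq_zero_of_integral_contDiff_smul_eq_zero
    (μ := volume) (f := fun t => t ^ (N-1) * F t) ?_ ?_
  rotate_left
  · refine ContinuousOn.locallyIntegrableOn ?_ measurableSet_Ioi
    exact (continuous_pow (N-1)).continuousOn.mul
      (fun t ht => (hFcont t ht).continuousWithinAt)
  · intro χ hχ hχc hχs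
    rw [← setIntegral_eq_integral_of_forall_compl_eq_zero
      (s := Ioi (0:ℝ)) (f := fun t => χ t • (t ^ (N-1) * F t)) ?_]
    · exact key2 χ hχ hχc hχs
    · intro t ht
      have : χ t = 0 := image_eq_zero_of_notMem_tsupport fun hmem => ht (hχs hmem)
      simp [this]
  -- upgrade a.e. vanishing to everywhere, by continuity
  have hSempty : (Ioi (0:ℝ) ∩ (fun t => t ^ (N-1) * F t) ⁻¹' ({0}ᶜ)) = ∅ := by
    by_contra hne'
    have hSopen : IsOpen (Ioi (0:ℝ) ∩ (fun t => t ^ (N-1) * F t) ⁻¹' ({0}ᶜ)) := by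
      refine ContinuousOn.isOpen_inter_preimage ?_ isOpen_Ioi isOpen_compl_singleton
      exact (continuous_pow (N-1)).continuousOn.mul
        (fun t ht => (hFcont t ht).continuousWithinAt)
    have hSnull : volume (Ioi (0:ℝ) ∩ (fun t => t ^ (N-1) * F t) ⁻¹' ({0}ᶜ)) = 0 := by
      refine measure_mono_null ?_ (ae_iff.1 hae)
      intro t ht
      exact fun hc => ht.2 (hc ht.1)
    exact absurd hSnull
      (ne_of_gt (hSopen.measure_pos volume (nonempty_iff_ne_empty.2 hne')))
  have hFr : F r = 0 := by
    have hmem : r ∉ (Ioi (0:ℝ) ∩ (fun t => t ^ (N-1) * F t) ⁻¹' ({0}ᶜ)) := by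
      rw [hSempty]; exact notMem_empty r
    have h2 : r ^ (N-1) * F r = 0 := by
      by_contra h3
      exact hmem ⟨hr, h3⟩
    have hrn : r ^ (N-1) ≠ 0 := pow_ne_zero _ (ne_of_gt hr)
    rcases mul_eq_zero.1 h2 with h4 | h4
    · exact absurd h4 hrn
    · exact h4
  have hrw : ∀ σ : sphere (0 : EuclideanSpace ℝ (Fin N)) 1,
      ⟪v (r • (σ : EuclideanSpace ℝ (Fin N))), w (r • (σ : EuclideanSpace ℝ (Fin N)))⟫ =
        u (r • (σ : EuclideanSpace ℝ (Fin N))) := by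
    intro σ
    have hσnz : (σ : EuclideanSpace ℝ (Fin N)) ≠ 0 := ne_of_mem_sphere σ.2 one_ne_zero
    have hrσ : r • (σ : EuclideanSpace ℝ (Fin N)) ≠ 0 := smul_ne_zero hr.ne' hσnz
    rw [hv _ hrσ, inner_add_left, real_inner_smul_left, hwsph _ hrσ, mul_zero, zero_add]
  calc (∫ σ : Metric.sphere (0 : EuclideanSpace ℝ (Fin N)) 1,
        ⟪v (r • (σ : EuclideanSpace ℝ (Fin N))),
          w (r • (σ : EuclideanSpace ℝ (Fin N)))⟫ ∂(volume.toSphere))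
      = F r := integral_congr_ae (Filter.Eventually.of_forall fun σ => hrw σ)
    _ = 0 := hFr
end
end

section
/- Let N ≥ 3, γ ∈ ℝ, and let u ∈ C_c^∞(ℝ^N \ {0}, ℝ^N). Define v(x) = |x|^{γ+(N-2)/2} u(x). Then ∫_{ℝ^N} |∂_r u|² |x|^{2γ} dx = (γ + (N-2)/2)² ∫_{ℝ^N} |u|² |x|^{2γ-2} dx + ∫_{ℝ^N} |x·∇v|² |x|^{-N} dx, where ∂_r u = (x/|x|)·∇u componentwise. -/
open MeasureTheory Set
open scoped ContDiff RealInnerProductSpace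

section
variable {N : ℕ}

local notation "E" => EuclideanSpace ℝ (Fin N)


lemma euclid_decomp (x : E) :
    ∑ i : Fin N, x i • (EuclideanSpace.single i (1:ℝ)) = x := by
  ext j
  have : (∑ i : Fin N, x i • (EuclideanSpace.single i (1:ℝ))) j
      = ∑ i : Fin N, (x i • (EuclideanSpace.single i (1:ℝ))) j :=
    by rw [WithLp.ofLp_sum, Finset.sum_apply]
  rw [this]
  simp [EuclideanSpace.single_apply]

lemma rpow_norm_hasFDerivAt {F : Type*} [NormedAddCommGroup F] [InnerProductSpace ℝ F]
    {x : F} (hx : x ≠ 0) (c : ℝ) :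
    HasFDerivAt (fun y : F => ‖y‖ ^ c) ((c * ‖x‖ ^ (c - 2)) • (innerSL ℝ x : F →L[ℝ] ℝ)) x := by
  have hxn : (0:ℝ) < ‖x‖ := norm_pos_iff.2 hx
  have h1 : HasFDerivAt (fun y : F => ‖y‖ ^ (2:ℕ)) ((2:ℕ) • (innerSL ℝ x : F →L[ℝ] ℝ)) x :=
    (hasStrictFDerivAt_norm_sq x).hasFDerivAt
  have h2 : (‖x‖ ^ (2:ℕ) : ℝ) ≠ 0 := by positivity
  have h3 := h1.rpow_const (p := c/2) (Or.inl h2)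
  have heq : (fun y : F => (‖y‖ ^ (2:ℕ)) ^ (c/2)) = fun y : F => ‖y‖ ^ c := by
    funext y
    rw [← Real.rpow_natCast ‖y‖ 2, ← Real.rpow_mul (norm_nonneg y)]
    congr 1
    push_cast
    ring
  rw [heq] at h3
  convert h3 using 1
  have h5 : ((‖x‖ ^ (2:ℕ) : ℝ)) ^ (c/2-1) = ‖x‖ ^ (c-2) := by
    rw [← Real.rpow_natCast ‖x‖ 2, ← Real.rpow_mul (norm_nonneg x)]
    congr 1
    push_cast
    ring
  ext y
  simp only [ContinuousLinearMap.smul_apply, smul_eq_mul, h5]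
  ring

lemma rpow_norm_inner_self {x : E} (hx : x ≠ 0) (c : ℝ) :
    ‖x‖ ^ (c - 2) * ⟪x, x⟫ = ‖x‖ ^ c := by
  have hxn : (0:ℝ) < ‖x‖ := norm_pos_iff.2 hx
  rw [real_inner_self_eq_norm_sq, ← Real.rpow_natCast ‖x‖ 2, ← Real.rpow_add hxn]
  norm_num

lemma cutoff_exists (δ : ℝ) (hδ : 0 < δ) :
    ∃ ψ : E → ℝ, ContDiff ℝ ∞ ψ ∧
      (∀ x : E, ‖x‖ ≤ δ/2 → ψ x = 0) ∧
      (∀ x : E, δ ≤ ‖x‖ → ψ x = 1) := by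
  obtain ⟨f, hf0, hf1, -⟩ := exists_contMDiffMap_zero_one_of_isClosed (n := (⊤ : ℕ∞))
    (I := modelWithCornersSelf ℝ (EuclideanSpace ℝ (Fin N)))
    (M := EuclideanSpace ℝ (Fin N))
    (s := Metric.closedBall 0 (δ/2)) (t := {x | δ ≤ ‖x‖})
    Metric.isClosed_closedBall (isClosed_le continuous_const continuous_norm)
    (by
      rw [Set.disjoint_left]
      intro x hx hx2
      simp only [Metric.mem_closedBall, dist_zero_right] at hx
      simp only [mem_setOf_eq] at hx2
      linarith)
  refine ⟨f, contMDiff_iff_contDiff.1 f.contMDiff, fun x hx => ?_, fun x hx => hf1 hx⟩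
  apply hf0
  simp only [Metric.mem_closedBall, dist_zero_right]
  exact hx

/-- Core integration by parts. -/
lemma ibp_radial (β : ℝ) {w : E → ℝ} (hw : ContDiff ℝ ∞ w) (hwc : HasCompactSupport w)
    {δ : ℝ} (hδ : 0 < δ) (hwz : ∀ x : E, ‖x‖ ≤ δ → w x = 0) :
    ∫ x : E, fderiv ℝ w x x * ‖x‖ ^ β = -((N:ℝ) + β) * ∫ x : E, w x * ‖x‖ ^ β := by
  have hone : (∞ : WithTop ℕ∞) ≠ 0 := by simp
  obtain ⟨ψ, hψ, hψ0, hψ1⟩ := cutoff_exists (N := N) (δ/2) (by positivity)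
  set g : E → ℝ := fun x => ψ x * ‖x‖ ^ β with hg_def
  -- g is smooth
  have hg : ContDiff ℝ ∞ g := by
    rw [contDiff_iff_contDiffAt]
    intro x
    rcases lt_or_ge ‖x‖ (δ/4) with hx | hx
    · have hev : g =ᶠ[nhds x] fun _ => (0:ℝ) := by
        filter_upwards [Metric.ball_mem_nhds x (show (0:ℝ) < δ/4 - ‖x‖ by linarith)] with y hy
        have h2 : dist y x < δ/4 - ‖x‖ := hy
        rw [dist_eq_norm] at h2
        have hyn : ‖y‖ ≤ δ/4 := by linarith [(norm_sub_norm_le y x).trans (le_of_lt h2)]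
        have : ψ y = 0 := hψ0 y (by linarith)
        simp [hg_def, this]
      exact (contDiffAt_const (c := (0:ℝ))).congr_of_eventuallyEq hev
    · have hx0 : x ≠ 0 := fun h => by rw [h, norm_zero] at hx; linarith
      exact (hψ.contDiffAt).mul
        ((contDiffAt_id.norm ℝ hx0).rpow_const_of_ne (norm_ne_zero_iff.2 hx0))
  have hgd : Differentiable ℝ g := hg.differentiable hone
  have hwd : Differentiable ℝ w := hw.differentiable hone
  -- g near infinity agrees with ‖·‖^β
  have hVopen : IsOpen {y : E | δ/2 < ‖y‖} := isOpen_lt continuous_const continuous_norm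
  have hgev : ∀ x : E, δ/2 < ‖x‖ → g =ᶠ[nhds x] fun y => ‖y‖ ^ β := by
    intro x hx
    filter_upwards [hVopen.mem_nhds hx] with y hy
    simp [hg_def, hψ1 y (le_of_lt hy)]
  have hgeq : ∀ x : E, δ/2 < ‖x‖ → g x = ‖x‖ ^ β := fun x hx => (hgev x hx).eq_of_nhds
  have hDg_self : ∀ x : E, δ/2 < ‖x‖ → fderiv ℝ g x x = β * ‖x‖ ^ β := by
    intro x hx
    have hx0 : x ≠ 0 := fun h => by rw [h, norm_zero] at hx; linarith
    rw [(hgev x hx).fderiv_eq, (rpow_norm_hasFDerivAt hx0 β).fderiv]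
    simp only [ContinuousLinearMap.smul_apply, innerSL_apply_apply, smul_eq_mul]
    rw [mul_assoc, rpow_norm_inner_self hx0 β]
  -- vanishing of fderiv w near 0
  have hDw0 : ∀ x : E, ‖x‖ < δ → fderiv ℝ w x = 0 := by
    intro x hx
    have hev : w =ᶠ[nhds x] fun _ => (0:ℝ) := by
      filter_upwards [(isOpen_lt continuous_norm continuous_const).mem_nhds
        (show x ∈ {y : E | ‖y‖ < δ} from hx)] with y hy
      exact hwz y (le_of_lt hy)
    rw [hev.fderiv_eq]
    exact fderiv_const_apply 0
  -- coordinates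
  set e : Fin N → E := fun i => EuclideanSpace.single i (1:ℝ) with he_def
  set G : Fin N → E → ℝ := fun i x => x i * g x with hG_def
  have hGsmooth : ∀ i, ContDiff ℝ ∞ (G i) := fun i =>
    ((EuclideanSpace.proj (𝕜 := ℝ) i).contDiff).mul hg
  have hGdiff : ∀ i, Differentiable ℝ (G i) := fun i => (hGsmooth i).differentiable hone
  have hDG : ∀ (i) (x : E), fderiv ℝ (G i) x
      = x i • fderiv ℝ g x + g x • (EuclideanSpace.proj (𝕜 := ℝ) i : E →L[ℝ] ℝ) := by
    intro i x
    exact ((EuclideanSpace.proj (𝕜 := ℝ) i).hasFDerivAt.mul (hgd x).hasFDerivAt).fderiv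
  -- integrability
  have hDwcont : Continuous (fun x : E => fderiv ℝ w x) := hw.continuous_fderiv hone
  have int1 : ∀ i, Integrable (fun x : E => fderiv ℝ w x (e i) * G i x) := by
    intro i
    apply Continuous.integrable_of_hasCompactSupport
    · exact (hDwcont.clm_apply continuous_const).mul (hGsmooth i).continuous
    · exact (((hwc.fderiv (𝕜 := ℝ))).comp_left (g := fun L : E →L[ℝ] ℝ => L (e i)) rfl).mul_right
  have int2 : ∀ i, Integrable (fun x : E => w x * fderiv ℝ (G i) x (e i)) := by
    intro i
    apply Continuous.integrable_of_hasCompactSupport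
    · exact hw.continuous.mul
        (((hGsmooth i).continuous_fderiv hone).clm_apply continuous_const)
    · exact hwc.mul_right
  have int3 : ∀ i, Integrable (fun x : E => w x * G i x) := by
    intro i
    apply Continuous.integrable_of_hasCompactSupport
    · exact hw.continuous.mul (hGsmooth i).continuous
    · exact hwc.mul_right
  have hibp : ∀ i, ∫ x : E, w x * fderiv ℝ (G i) x (e i)
      = -∫ x : E, fderiv ℝ w x (e i) * G i x := fun i =>
    integral_mul_fderiv_eq_neg_fderiv_mul_of_integrable (int1 i) (int2 i) (int3 i) (fun x _ => hwd x) (fun x _ => hGdiff i x)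
  -- sum over coordinates
  have hsum : ∫ x : E, ∑ i : Fin N, w x * fderiv ℝ (G i) x (e i)
      = -∫ x : E, ∑ i : Fin N, fderiv ℝ w x (e i) * G i x := by
    rw [integral_finset_sum _ (fun i _ => int2 i), integral_finset_sum _ (fun i _ => int1 i)]
    rw [← Finset.sum_neg_distrib]
    exact Finset.sum_congr rfl (fun i _ => hibp i)
  -- pointwise sums
  have hptL : ∀ x : E, ∑ i : Fin N, w x * fderiv ℝ (G i) x (e i)
      = w x * ((N:ℝ) * g x + fderiv ℝ g x x) := by
    intro x
    have h1 : ∀ i, fderiv ℝ (G i) x (e i) = x i * fderiv ℝ g x (e i) + g x := by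
      intro i
      rw [hDG i x]
      simp only [ContinuousLinearMap.add_apply, ContinuousLinearMap.smul_apply, smul_eq_mul]
      congr 1
      have : (EuclideanSpace.proj (𝕜 := ℝ) i : E →L[ℝ] ℝ) (e i) = 1 := by
        simp [he_def, EuclideanSpace.single_apply]
      rw [this, mul_one]
    simp only [h1]
    rw [← Finset.mul_sum]
    congr 1
    rw [Finset.sum_add_distrib, Finset.sum_const, Finset.card_univ, Fintype.card_fin]
    have h2 : ∑ i : Fin N, x i * fderiv ℝ g x (e i) = fderiv ℝ g x x := by
      have h3 : fderiv ℝ g x (∑ i : Fin N, x i • e i)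
          = ∑ i : Fin N, x i * fderiv ℝ g x (e i) := by
        rw [_root_.map_sum]
        exact Finset.sum_congr rfl (fun i _ => by
          rw [ContinuousLinearMap.map_smul]; rfl)
      rw [← h3, he_def, euclid_decomp x]
    rw [h2]
    push_cast
    ring
  have hptR : ∀ x : E, ∑ i : Fin N, fderiv ℝ w x (e i) * G i x
      = fderiv ℝ w x x * g x := by
    intro x
    have h2 : ∑ i : Fin N, x i * fderiv ℝ w x (e i) = fderiv ℝ w x x := by
      have h3 : fderiv ℝ w x (∑ i : Fin N, x i • e i)
          = ∑ i : Fin N, x i * fderiv ℝ w x (e i) := by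
        rw [_root_.map_sum]
        exact Finset.sum_congr rfl (fun i _ => by
          rw [ContinuousLinearMap.map_smul]; rfl)
      rw [← h3, he_def, euclid_decomp x]
    calc ∑ i : Fin N, fderiv ℝ w x (e i) * G i x
        = (∑ i : Fin N, x i * fderiv ℝ w x (e i)) * g x := by
          rw [Finset.sum_mul]
          exact Finset.sum_congr rfl (fun i _ => by simp [hG_def]; ring)
      _ = fderiv ℝ w x x * g x := by rw [h2]
  simp only [hptL, hptR] at hsum
  -- replace g by ‖·‖^β
  have hrepl1 : ∀ x : E, w x * ((N:ℝ) * g x + fderiv ℝ g x x)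
      = ((N:ℝ) + β) * (w x * ‖x‖ ^ β) := by
    intro x
    rcases le_or_gt ‖x‖ (δ/2) with hx | hx
    · rw [hwz x (by linarith)]; ring
    · rw [hgeq x hx, hDg_self x hx]; ring
  have hrepl2 : ∀ x : E, fderiv ℝ w x x * g x = fderiv ℝ w x x * ‖x‖ ^ β := by
    intro x
    rcases le_or_gt ‖x‖ (δ/2) with hx | hx
    · rw [hDw0 x (by linarith)]; simp
    · rw [hgeq x hx]
  simp only [hrepl1, hrepl2] at hsum
  rw [integral_const_mul] at hsum
  linarith [hsum]

lemma continuousAt_clm_apply' {X E' G : Type*} [TopologicalSpace X]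
    [NormedAddCommGroup E'] [NormedSpace ℝ E'] [NormedAddCommGroup G] [NormedSpace ℝ G]
    {f : X → (E' →L[ℝ] G)} {m : X → E'} {x : X}
    (hf : ContinuousAt f x) (hm : ContinuousAt m x) :
    ContinuousAt (fun y => f y (m y)) x :=
  hf.clm_apply hm

lemma main_aux (γ : ℝ) (u : E → E) (husm : ContDiff ℝ ∞ u)
    (hsupp : HasCompactSupport u) {δ : ℝ} (hδ : 0 < δ)
    (huz : ∀ x : E, ‖x‖ < δ → u x = 0) :
    (∫ x : E, ‖fderiv ℝ u x (‖x‖⁻¹ • x)‖ ^ 2 * ‖x‖ ^ (2 * γ))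
      = (γ + ((N : ℝ) - 2) / 2) ^ 2
          * (∫ x : E, ‖u x‖ ^ 2 * ‖x‖ ^ (2 * γ - 2))
        + ∫ x : E, ‖fderiv ℝ (fun y : E => ‖y‖ ^ (γ + ((N : ℝ) - 2) / 2) • u y) x x‖ ^ 2
            * ‖x‖ ^ (-(N : ℝ)) := by
  have hone : (∞ : WithTop ℕ∞) ≠ 0 := by simp
  set α : ℝ := γ + ((N : ℝ) - 2) / 2 with hα
  clear_value α
  set v : E → E := fun y : E => ‖y‖ ^ α • u y with hv_def
  set w : E → ℝ := fun y : E => ‖u y‖ ^ 2 with hw_def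
  have hud : Differentiable ℝ u := husm.differentiable hone
  -- vanishing near zero
  have hBopen : IsOpen {y : E | ‖y‖ < δ} := isOpen_lt continuous_norm continuous_const
  have hDu0 : ∀ x : E, ‖x‖ < δ → fderiv ℝ u x = 0 := by
    intro x hx
    have hev : u =ᶠ[nhds x] fun _ => (0:E) := by
      filter_upwards [hBopen.mem_nhds hx] with y hy using huz y hy
    rw [hev.fderiv_eq]; exact fderiv_const_apply 0
  have hvz : ∀ x : E, ‖x‖ < δ → v x = 0 := by
    intro x hx; rw [hv_def]; simp [huz x hx]
  have hwz : ∀ x : E, ‖x‖ < δ → w x = 0 := by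
    intro x hx; rw [hw_def]; simp [huz x hx]
  have hDv0 : ∀ x : E, ‖x‖ < δ → fderiv ℝ v x = 0 := by
    intro x hx
    have hev : v =ᶠ[nhds x] fun _ => (0:E) := by
      filter_upwards [hBopen.mem_nhds hx] with y hy using hvz y hy
    rw [hev.fderiv_eq]; exact fderiv_const_apply 0
  have hDw0 : ∀ x : E, ‖x‖ < δ → fderiv ℝ w x = 0 := by
    intro x hx
    have hev : w =ᶠ[nhds x] fun _ => (0:ℝ) := by
      filter_upwards [hBopen.mem_nhds hx] with y hy using hwz y hy
    rw [hev.fderiv_eq]; exact fderiv_const_apply 0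
  -- smoothness of v and w
  have hvsm : ContDiff ℝ ∞ v := by
    rw [contDiff_iff_contDiffAt]
    intro x
    rcases eq_or_ne x 0 with rfl | hx
    · have hev : v =ᶠ[nhds (0:E)] fun _ => (0:E) := by
        filter_upwards [hBopen.mem_nhds (by simp [hδ] : (0:E) ∈ {y : E | ‖y‖ < δ})] with y hy
          using hvz y hy
      exact (contDiffAt_const (c := (0:E))).congr_of_eventuallyEq hev
    · exact ((contDiffAt_id.norm ℝ hx).rpow_const_of_ne (norm_ne_zero_iff.2 hx)).smul
        husm.contDiffAt
  have hwsm : ContDiff ℝ ∞ w := husm.norm_sq (𝕜 := ℝ)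
  have hvd : Differentiable ℝ v := hvsm.differentiable hone
  -- compact supports
  have hvc : HasCompactSupport v := by
    apply hsupp.mono'
    intro x hx
    apply subset_closure
    simp only [Function.mem_support, hv_def] at hx ⊢
    intro h
    exact hx (by simp [h])
  have hwc : HasCompactSupport w := by
    apply hsupp.mono'
    intro x hx
    apply subset_closure
    simp only [Function.mem_support, hw_def] at hx ⊢
    intro h
    exact hx (by simp [h])
  -- derivative formulas
  have hDw : ∀ x : E, fderiv ℝ w x x = 2 * ⟪u x, fderiv ℝ u x x⟫ := by
    intro x
    rw [hw_def]
    rw [(hud x).hasFDerivAt.norm_sq.fderiv]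
    simp [two_smul]
    ring
  have hDv : ∀ x : E, x ≠ 0 →
      fderiv ℝ v x x = ‖x‖ ^ α • fderiv ℝ u x x + (α * ‖x‖ ^ α) • u x := by
    intro x hx
    have h3 := (rpow_norm_hasFDerivAt hx α).smul (hud x).hasFDerivAt
    rw [hv_def, (show HasFDerivAt (fun y : E => ‖y‖ ^ α • u y) _ x from h3).fderiv]
    simp only [ContinuousLinearMap.add_apply, ContinuousLinearMap.smul_apply,
      ContinuousLinearMap.smulRight_apply, innerSL_apply_apply]
    congr 1
    rw [smul_eq_mul, mul_assoc, rpow_norm_inner_self hx α]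
  -- pointwise identity
  have hpt : ∀ x : E, ‖fderiv ℝ u x (‖x‖⁻¹ • x)‖ ^ 2 * ‖x‖ ^ (2 * γ)
      = ‖fderiv ℝ v x x‖ ^ 2 * ‖x‖ ^ (-(N:ℝ))
        - α ^ 2 * (‖u x‖ ^ 2 * ‖x‖ ^ (2 * γ - 2))
        - α * (fderiv ℝ w x x * ‖x‖ ^ (2 * γ - 2)) := by
    intro x
    rcases eq_or_ne x 0 with rfl | hx
    · rw [hDu0 0 (by simpa using hδ), hDv0 0 (by simpa using hδ), hDw0 0 (by simpa using hδ),
        huz 0 (by simpa using hδ)]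
      simp
    · have hr : (0:ℝ) < ‖x‖ := norm_pos_iff.2 hx
      have hinv : fderiv ℝ u x (‖x‖⁻¹ • x) = ‖x‖⁻¹ • fderiv ℝ u x x :=
        (fderiv ℝ u x).map_smul _ _
      rw [hinv, hDv x hx, hDw x]
      have k1 : ‖x‖⁻¹ ^ 2 * ‖x‖ ^ (2*γ) = ‖x‖ ^ (2*γ-2) := by
        rw [inv_pow, ← Real.rpow_natCast ‖x‖ 2, ← Real.rpow_neg hr.le, ← Real.rpow_add hr]
        congr 1
        push_cast
        ring
      have k2 : ‖x‖ ^ α * (‖x‖ ^ α * ‖x‖ ^ (-(N:ℝ))) = ‖x‖ ^ (2*γ-2) := by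
        rw [← Real.rpow_add hr, ← Real.rpow_add hr]
        congr 1
        rw [hα]
        ring
      rw [norm_smul, norm_add_sq_real, norm_smul, norm_smul,
        real_inner_smul_left, real_inner_smul_right]
      simp only [Real.norm_eq_abs, mul_pow, sq_abs]
      linear_combination (‖fderiv ℝ u x x‖^2) * k1
        - (‖fderiv ℝ u x x‖^2 + 2*α*⟪fderiv ℝ u x x, u x⟫ + α^2*‖u x‖^2) * k2
        - (2*α*‖x‖^(2*γ-2)) * (real_inner_comm (u x) (fderiv ℝ u x x))
  -- continuity and integrability
  have hcont_aux : ∀ {f : E → ℝ}, (∀ y : E, ‖y‖ < δ → f y = 0) →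
      (∀ x : E, x ≠ 0 → ContinuousAt f x) → Continuous f := by
    intro f h0 h1
    rw [continuous_iff_continuousAt]
    intro x
    rcases lt_or_ge ‖x‖ δ with hx | hx
    · have hev : f =ᶠ[nhds x] fun _ => (0:ℝ) := by
        filter_upwards [hBopen.mem_nhds hx] with y hy using h0 y hy
      exact hev.continuousAt
    · exact h1 x (fun h => by rw [h, norm_zero] at hx; linarith)
  have hrpowCA : ∀ (c : ℝ) (x : E), x ≠ 0 → ContinuousAt (fun y : E => ‖y‖ ^ c) x := by
    intro c x hx
    exact (Real.continuousAt_rpow_const ‖x‖ c (Or.inl (norm_ne_zero_iff.2 hx))).comp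
      continuous_norm.continuousAt
  have hcont1 : Continuous (fun x : E => ‖fderiv ℝ u x (‖x‖⁻¹ • x)‖ ^ 2 * ‖x‖ ^ (2 * γ)) := by
    apply hcont_aux
    · intro y hy
      rw [hDu0 y hy]
      simp
    · intro x hx
      have h1 : ContinuousAt (fun y : E => fderiv ℝ u y (‖y‖⁻¹ • y)) x :=
        continuousAt_clm_apply' ((husm.continuous_fderiv hone).continuousAt)
          (((continuous_norm.continuousAt).inv₀ (norm_ne_zero_iff.2 hx)).smul continuousAt_id)
      exact ((h1.norm.pow 2).mul (hrpowCA (2*γ) x hx))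
  have hcont2 : Continuous (fun x : E => ‖u x‖ ^ 2 * ‖x‖ ^ (2 * γ - 2)) := by
    apply hcont_aux
    · intro y hy; simp [huz y hy]
    · intro x hx
      exact ((husm.continuous.continuousAt.norm.pow 2).mul (hrpowCA (2*γ-2) x hx))
  have hcont3 : Continuous (fun x : E => ‖fderiv ℝ v x x‖ ^ 2 * ‖x‖ ^ (-(N:ℝ))) := by
    apply hcont_aux
    · intro y hy; rw [hDv0 y hy]; simp
    · intro x hx
      have h1 : ContinuousAt (fun y : E => fderiv ℝ v y y) x :=
        continuousAt_clm_apply' ((hvsm.continuous_fderiv hone).continuousAt) continuousAt_id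
      exact ((h1.norm.pow 2).mul (hrpowCA (-(N:ℝ)) x hx))
  have hcont4 : Continuous (fun x : E => fderiv ℝ w x x * ‖x‖ ^ (2 * γ - 2)) := by
    apply hcont_aux
    · intro y hy; rw [hDw0 y hy]; simp
    · intro x hx
      have h1 : ContinuousAt (fun y : E => fderiv ℝ w y y) x :=
        continuousAt_clm_apply' ((hwsm.continuous_fderiv hone).continuousAt) continuousAt_id
      exact (h1.mul (hrpowCA (2*γ-2) x hx))
  have hcs : ∀ {f : E → ℝ}, (∀ x : E, x ∉ tsupport u → f x = 0) → HasCompactSupport f := by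
    intro f hf
    apply hsupp.mono'
    intro x hx
    by_contra hmem
    exact hx (hf x hmem)
  have hDu_ts : ∀ x : E, x ∉ tsupport u → fderiv ℝ u x = 0 := fun x hx =>
    Function.notMem_support.1 (fun h => hx (support_fderiv_subset ℝ h))
  have hts_v : tsupport v ⊆ tsupport u := closure_mono (by
    intro x hx
    simp only [Function.mem_support, hv_def] at hx ⊢
    intro h
    exact hx (by simp [h]))
  have hts_w : tsupport w ⊆ tsupport u := closure_mono (by
    intro x hx
    simp only [Function.mem_support, hw_def] at hx ⊢
    intro h
    exact hx (by simp [h]))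
  have hDv_ts : ∀ x : E, x ∉ tsupport u → fderiv ℝ v x = 0 := fun x hx =>
    Function.notMem_support.1 (fun h => hx (hts_v (support_fderiv_subset ℝ h)))
  have hDw_ts : ∀ x : E, x ∉ tsupport u → fderiv ℝ w x = 0 := fun x hx =>
    Function.notMem_support.1 (fun h => hx (hts_w (support_fderiv_subset ℝ h)))
  have I1 : Integrable (fun x : E => ‖fderiv ℝ u x (‖x‖⁻¹ • x)‖ ^ 2 * ‖x‖ ^ (2 * γ)) volume :=
    hcont1.integrable_of_hasCompactSupport (hcs (fun x hx => by rw [hDu_ts x hx]; simp))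
  have I2 : Integrable (fun x : E => ‖u x‖ ^ 2 * ‖x‖ ^ (2 * γ - 2)) volume :=
    hcont2.integrable_of_hasCompactSupport
      (hcs (fun x hx => by rw [image_eq_zero_of_notMem_tsupport hx]; simp))
  have I3 : Integrable (fun x : E => ‖fderiv ℝ v x x‖ ^ 2 * ‖x‖ ^ (-(N:ℝ))) volume :=
    hcont3.integrable_of_hasCompactSupport (hcs (fun x hx => by rw [hDv_ts x hx]; simp))
  have I4 : Integrable (fun x : E => fderiv ℝ w x x * ‖x‖ ^ (2 * γ - 2)) volume :=
    hcont4.integrable_of_hasCompactSupport (hcs (fun x hx => by rw [hDw_ts x hx]; simp))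
  -- the integration by parts
  have hwz' : ∀ x : E, ‖x‖ ≤ δ/2 → w x = 0 := fun x hx => hwz x (by linarith)
  have hibp : ∫ x : E, fderiv ℝ w x x * ‖x‖ ^ (2*γ-2)
      = -((N:ℝ) + (2*γ-2)) * ∫ x : E, ‖u x‖ ^ 2 * ‖x‖ ^ (2*γ-2) :=
    ibp_radial (N := N) (2*γ-2) hwsm hwc (show (0:ℝ) < δ/2 by linarith) hwz'
  -- assemble
  have hsub1 : Integrable (fun x : E => ‖fderiv ℝ v x x‖ ^ 2 * ‖x‖ ^ (-(N:ℝ))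
      - α^2 * (‖u x‖ ^ 2 * ‖x‖ ^ (2*γ-2))) volume := I3.sub (I2.const_mul (α^2))
  have key : ∫ x : E, ‖fderiv ℝ u x (‖x‖⁻¹ • x)‖ ^ 2 * ‖x‖ ^ (2 * γ)
      = ∫ x : E, (‖fderiv ℝ v x x‖ ^ 2 * ‖x‖ ^ (-(N:ℝ))
          - α ^ 2 * (‖u x‖ ^ 2 * ‖x‖ ^ (2 * γ - 2))
          - α * (fderiv ℝ w x x * ‖x‖ ^ (2 * γ - 2))) := by
    congr 1
    funext x
    exact hpt x
  rw [key, integral_sub hsub1 (I4.const_mul α), integral_sub I3 (I2.const_mul (α^2)),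
    integral_const_mul, integral_const_mul, hibp, hα]
  ring
end

/-- radial Hardy identity via the Brezis–Vázquez substitution
`v = |x|^{γ+(N-2)/2} u`. -/
theorem stmt14 (N : ℕ) (hN : 3 ≤ N) (γ : ℝ)
    (u : EuclideanSpace ℝ (Fin N) → EuclideanSpace ℝ (Fin N))
    (hu : ContDiffOn ℝ (⊤ : ℕ∞) u {(0 : EuclideanSpace ℝ (Fin N))}ᶜ)
    (hsupp : HasCompactSupport u)
    (hsupp' : tsupport u ⊆ {(0 : EuclideanSpace ℝ (Fin N))}ᶜ)
    (v : EuclideanSpace ℝ (Fin N) → EuclideanSpace ℝ (Fin N))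
    (hv : ∀ x, v x = ‖x‖ ^ (γ + ((N : ℝ) - 2) / 2) • u x) :
    (∫ x : EuclideanSpace ℝ (Fin N),
        ‖fderiv ℝ u x (‖x‖⁻¹ • x)‖ ^ 2 * ‖x‖ ^ (2 * γ))
      = (γ + ((N : ℝ) - 2) / 2) ^ 2
          * (∫ x : EuclideanSpace ℝ (Fin N), ‖u x‖ ^ 2 * ‖x‖ ^ (2 * γ - 2))
        + ∫ x : EuclideanSpace ℝ (Fin N),
            ‖fderiv ℝ v x x‖ ^ 2 * ‖x‖ ^ (-(N : ℝ)) := by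
  have hveq : v = fun x => ‖x‖ ^ (γ + ((N : ℝ) - 2) / 2) • u x := funext hv
  subst hveq
  have h0 : (0 : EuclideanSpace ℝ (Fin N)) ∉ tsupport u := fun h => by simpa using hsupp' h
  obtain ⟨ε, hε, hball⟩ : ∃ ε > 0, Metric.ball (0 : EuclideanSpace ℝ (Fin N)) ε ⊆ (tsupport u)ᶜ :=
    Metric.mem_nhds_iff.1 ((isClosed_tsupport u).isOpen_compl.mem_nhds h0)
  have husm : ContDiff ℝ ∞ u := by
    rw [contDiff_iff_contDiffAt]
    intro x
    rcases eq_or_ne x 0 with rfl | hx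
    · refine (contDiffAt_const (c := (0 : EuclideanSpace ℝ (Fin N)))).congr_of_eventuallyEq ?_
      filter_upwards [Metric.ball_mem_nhds (0 : EuclideanSpace ℝ (Fin N)) hε] with y hy
        using image_eq_zero_of_notMem_tsupport (hball hy)
    · exact (hu.contDiffAt (isOpen_compl_singleton.mem_nhds hx)).of_le (by simp)
  exact main_aux γ u husm hsupp hε (fun x hx =>
    image_eq_zero_of_notMem_tsupport (hball (by simpa [Metric.mem_ball, dist_zero_right] using hx)))
end
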